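/- arXiv:1302.5618 — 6 statements merged into one kernel-verified Lean document; each statement's English description precedes it below -/
import Mathlib

section
/- Let x ∈ V and let y ∈ V be special. Then for every w ∈ W there exists ℓ ∈ X_{x,y}^+ such that the translation t(ℓ) lies in the double coset W_y w W_x; in other words, the translations t(ℓ) with ℓ ∈ X_{x,y}^+ exhaust the double coset space W_y\W/W_x. -/
/-!
Write `w = t(m) u` with `u ∈ W₀` and `m ∈ Q`. For `g ∈ W_x^lin`, conjugating `g u⁻¹` by `t(y)`
gives an element of `W_y` and conjugating `g⁻¹` by `t(x)` an element of `W_x`; the product of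
the first, `w` and the second is the translation by `y - x + g p`, `p = x + u⁻¹ m - u⁻¹ y`, and
this vector lies in `Q` because `y` is special and `g` fixes `x` modulo `Q`.

It remains to choose `g` with `α (g p) ≥ 0` for `α ∈ Φ_x^{lin,+}`. The group `W₀` is finite, so
take `g` maximizing `B (v₀, g p)`, where `B v w = ∑_β β v * β w` is the root form and `v₀` defines
`Φ^+`. Since `B` is invariant under each reflection `s_α`, `B (v₀, α^∨) = α(v₀)/2 · B (α^∨, α^∨)`,
which is positive for positive `α`; comparing `g` with `s_α g` then gives `α (g p) ≥ 0`.
-/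

theorem Subgroup.closure_toSubmonoid_le_of_inv_mem {G : Type*} [Group G] {S : Set G}
    {M : Submonoid G} (hS : S ⊆ M) (hinv : ∀ g ∈ S, g⁻¹ ∈ M) :
    (Subgroup.closure S).toSubmonoid ≤ M := by
  rw [Subgroup.closure_toSubmonoid, Submonoid.closure_le]
  refine Set.union_subset hS fun g hg => ?_
  simpa using hinv _ (Set.mem_inv.mp hg)

namespace AffineWeyl

variable {V : Type*} [AddCommGroup V] [Module ℝ V]

noncomputable def rootForm (Φ : Finset (Module.Dual ℝ V)) : LinearMap.BilinForm ℝ V :=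
  ∑ β ∈ Φ, (LinearMap.mul ℝ ℝ).compl₁₂ β β

theorem rootForm_apply (Φ : Finset (Module.Dual ℝ V)) (v w : V) :
    rootForm Φ v w = ∑ β ∈ Φ, β v * β w := by
  simp [rootForm, LinearMap.sum_apply]

section Reflection

variable {Φ : Finset (Module.Dual ℝ V)} {α : Module.Dual ℝ V} {c : V}

theorem rootForm_reflect (hc : α c = 2) (hΦ : ∀ β ∈ Φ, β - β c • α ∈ Φ) (v w : V) :
    rootForm Φ (v - α v • c) (w - α w • c) = rootForm Φ v w := by
  have hinvol : ∀ β : Module.Dual ℝ V, β - β c • α - (β - β c • α) c • α = β := by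
    intro β
    simp only [LinearMap.sub_apply, LinearMap.smul_apply, hc, smul_eq_mul]
    module
  simp only [rootForm_apply]
  refine Finset.sum_nbij' (fun β => β - β c • α) (fun β => β - β c • α) hΦ hΦ
    (fun β _ => hinvol β) (fun β _ => hinvol β) fun β _ => ?_
  simp only [map_sub, map_smul, LinearMap.sub_apply, LinearMap.smul_apply, smul_eq_mul]
  ring

theorem rootForm_coroot_right (hc : α c = 2) (hΦ : ∀ β ∈ Φ, β - β c • α ∈ Φ) (v : V) :
    rootForm Φ v c = α v / 2 * rootForm Φ c c := by
  set v' := v - (α v / 2) • c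
  have hv' : α v' = 0 := by
    simp only [v', map_sub, map_smul, hc, smul_eq_mul]; ring
  have hfix : rootForm Φ v' c = 0 := by
    have h := rootForm_reflect hc hΦ v' c
    rw [hv', zero_smul, sub_zero, hc, two_smul, sub_add_cancel_left, map_neg] at h
    linarith
  calc rootForm Φ v c = rootForm Φ (v' + (α v / 2) • c) c := by rw [sub_add_cancel]
    _ = α v / 2 * rootForm Φ c c := by
      rw [map_add, map_smul, LinearMap.add_apply, LinearMap.smul_apply, hfix, zero_add,
        smul_eq_mul]

theorem rootForm_coroot_self_pos (hc : α c = 2) (hα : α ∈ Φ) : 0 < rootForm Φ c c := by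
  rw [rootForm_apply]
  calc (0 : ℝ) < α c * α c := by rw [hc]; norm_num
    _ ≤ ∑ β ∈ Φ, β c * β c := Finset.single_le_sum (fun β _ => mul_self_nonneg (β c)) hα

theorem rootForm_coroot_pos (hc : α c = 2) (hα : α ∈ Φ) (hΦ : ∀ β ∈ Φ, β - β c • α ∈ Φ)
    {v : V} (hv : 0 < α v) : 0 < rootForm Φ v c := by
  rw [rootForm_coroot_right hc hΦ]
  exact mul_pos (half_pos hv) (rootForm_coroot_self_pos hc hα)

end Reflection

-- `g ∈ S` is determined by the induced map `Φ → Φ`, since `Φ` spans the dual space.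
theorem finite_of_forall_comp_mem {Φ : Set (Module.Dual ℝ V)} (hfin : Φ.Finite)
    (hspan : Submodule.span ℝ Φ = ⊤) {S : Set (Equiv.Perm V)}
    (hS : ∀ g ∈ S, ∀ α ∈ Φ, ∃ β ∈ Φ, ∀ v, α (g v) = β v) : S.Finite := by
  have := hfin.to_subtype
  choose π hπΦ hπ using hS
  let F : S → (Φ → Φ) := fun g α => ⟨π g g.2 α α.2, hπΦ g g.2 α α.2⟩
  have hF : F.Injective := by
    intro g g' hgg'
    refine Subtype.ext (Equiv.ext fun v => Module.eval_apply_injective ℝ ?_)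
    refine LinearMap.ext_on hspan fun α hα => ?_
    have h := congrArg (fun f : Φ → Φ => ((f ⟨α, hα⟩ : Module.Dual ℝ V) v)) hgg'
    simp only [F] at h
    simp only [Module.Dual.eval_apply, hπ g g.2 α hα, hπ g' g'.2 α hα, h]
  exact Set.finite_coe_iff.mp (Finite.of_injective F hF)

theorem exists_mem_forall_nonneg {H : Subgroup (Equiv.Perm V)}
    (hH : (H : Set (Equiv.Perm V)).Finite)
    (f : Module.Dual ℝ V) {A : Set (Module.Dual ℝ V)} (coroot : Module.Dual ℝ V → V)
    (s : Module.Dual ℝ V → Equiv.Perm V) (hs : ∀ α ∈ A, ∀ v, s α v = v - α v • coroot α)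
    (hsH : ∀ α ∈ A, s α ∈ H) (hf : ∀ α ∈ A, 0 < f (coroot α)) (p : V) :
    ∃ g ∈ H, ∀ α ∈ A, 0 ≤ α (g p) := by
  obtain ⟨g, hg, hmax⟩ :=
    Set.exists_max_image (H : Set (Equiv.Perm V)) (fun g => f (g p)) hH ⟨1, H.one_mem⟩
  refine ⟨g, hg, fun α hα => ?_⟩
  have h := hmax (s α * g) (H.mul_mem (hsH α hα) hg)
  simp only [Equiv.Perm.mul_apply, hs α hα, map_sub, map_smul, smul_eq_mul] at h
  exact nonneg_of_mul_nonneg_left (by linarith) (hf α hα)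

structure IsLatticeSymmetry (Φ : Set (Module.Dual ℝ V)) (Q : AddSubgroup V) (z : V)
    (g : Equiv.Perm V) : Prop where
  isLinearMap : IsLinearMap ℝ g
  mapsTo : ∀ ℓ ∈ Q, g ℓ ∈ Q
  sub_mem : z - g z ∈ Q
  comp_mem : ∀ α ∈ Φ, ∃ β ∈ Φ, ∀ v, α (g v) = β v

def latticeSymmetries (Φ : Set (Module.Dual ℝ V)) (Q : AddSubgroup V) (z : V) :
    Submonoid (Equiv.Perm V) where
  carrier := {g | IsLatticeSymmetry Φ Q z g}
  one_mem' :=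
    { isLinearMap := LinearMap.id.isLinear
      mapsTo := fun _ h => h
      sub_mem := by simp
      comp_mem := fun α hα => ⟨α, hα, fun _ => rfl⟩ }
  mul_mem' {g h} hg hh :=
    { isLinearMap := ((hg.isLinearMap.mk' g).comp (hh.isLinearMap.mk' h)).isLinear
      mapsTo := fun ℓ hℓ => hg.mapsTo _ (hh.mapsTo ℓ hℓ)
      sub_mem := by
        have e : z - (g * h) z = (z - g z) + g (z - h z) := by
          rw [Equiv.Perm.mul_apply, hg.isLinearMap.map_sub]; abel
        rw [e]
        exact Q.add_mem hg.sub_mem (hg.mapsTo _ hh.sub_mem)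
      comp_mem := fun α hα => by
        obtain ⟨β, hβ, hβe⟩ := hg.comp_mem α hα
        obtain ⟨γ, hγ, hγe⟩ := hh.comp_mem β hβ
        exact ⟨γ, hγ, fun v => by rw [Equiv.Perm.mul_apply, hβe, hγe]⟩ }

section CorootLattice

variable {Φ : Set (Module.Dual ℝ V)} {coroot : Module.Dual ℝ V → V}

theorem exists_int_eq_apply_of_mem_closure
    (hcrys : ∀ α ∈ Φ, ∀ β ∈ Φ, ∃ n : ℤ, β (coroot α) = (n : ℝ))
    {ℓ : V} (hℓ : ℓ ∈ AddSubgroup.closure (coroot '' Φ)) {α : Module.Dual ℝ V} (hα : α ∈ Φ) :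
    ∃ n : ℤ, α ℓ = (n : ℝ) := by
  have hle : AddSubgroup.closure (coroot '' Φ) ≤
      (Int.castAddHom ℝ).range.comap α.toAddMonoidHom := by
    rw [AddSubgroup.closure_le]
    rintro _ ⟨β, hβ, rfl⟩
    obtain ⟨n, hn⟩ := hcrys β hβ α hα
    exact ⟨n, hn.symm⟩
  obtain ⟨n, hn⟩ := hle hℓ
  exact ⟨n, hn.symm⟩

theorem reflection_mem_latticeSymmetries
    (hrefl : ∀ α ∈ Φ, ∀ β ∈ Φ, β - β (coroot α) • α ∈ Φ)
    (hcrys : ∀ α ∈ Φ, ∀ β ∈ Φ, ∃ n : ℤ, β (coroot α) = (n : ℝ))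
    {α : Module.Dual ℝ V} (hα : α ∈ Φ) {f : Equiv.Perm V}
    (hf : ∀ v, f v = v - α v • coroot α) {z : V} (hz : ∃ n : ℤ, α z = (n : ℝ)) :
    f ∈ latticeSymmetries Φ (AddSubgroup.closure (coroot '' Φ)) z := by
  have hcoroot : ∀ n : ℤ, (n : ℝ) • coroot α ∈ AddSubgroup.closure (coroot '' Φ) := fun n => by
    rw [Int.cast_smul_eq_zsmul]
    exact zsmul_mem (AddSubgroup.subset_closure (Set.mem_image_of_mem coroot hα)) n
  refine ⟨⟨fun a b => ?_, fun c a => ?_⟩, fun ℓ hℓ => ?_, ?_, fun β hβ => ?_⟩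
  · simp only [hf, map_add]; module
  · simp only [hf, map_smul, smul_eq_mul]; module
  · obtain ⟨n, hn⟩ := exists_int_eq_apply_of_mem_closure hcrys hℓ hα
    rw [hf, hn]
    exact sub_mem hℓ (hcoroot n)
  · obtain ⟨n, hn⟩ := hz
    rw [hf, sub_sub_cancel, hn]
    exact hcoroot n
  · refine ⟨β - β (coroot α) • α, hrefl α hα β hβ, fun v => ?_⟩
    simp only [hf, map_sub, map_smul, LinearMap.sub_apply, LinearMap.smul_apply, smul_eq_mul]
    ring

theorem reflection_mul_self {α : Module.Dual ℝ V} {c : V} (hc : α c = 2) {f : Equiv.Perm V}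
    (hf : ∀ v, f v = v - α v • c) : f * f = 1 := by
  ext v
  simp only [Equiv.Perm.mul_apply, hf, map_sub, map_smul, hc, smul_eq_mul, Equiv.Perm.one_apply]
  module

theorem closure_reflections_le
    (hpair : ∀ α ∈ Φ, α (coroot α) = 2)
    (hrefl : ∀ α ∈ Φ, ∀ β ∈ Φ, β - β (coroot α) • α ∈ Φ)
    (hcrys : ∀ α ∈ Φ, ∀ β ∈ Φ, ∃ n : ℤ, β (coroot α) = (n : ℝ))
    {s : Module.Dual ℝ V → Equiv.Perm V} (hs : ∀ α ∈ Φ, ∀ v : V, s α v = v - α v • coroot α)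
    {A : Set (Module.Dual ℝ V)} (hA : A ⊆ Φ) {z : V} (hz : ∀ α ∈ A, ∃ n : ℤ, α z = (n : ℝ)) :
    (Subgroup.closure (s '' A)).toSubmonoid ≤
      latticeSymmetries Φ (AddSubgroup.closure (coroot '' Φ)) z := by
  have hmem : s '' A ⊆ latticeSymmetries Φ (AddSubgroup.closure (coroot '' Φ)) z := by
    rintro _ ⟨α, hαA, rfl⟩
    exact reflection_mem_latticeSymmetries hrefl hcrys (hA hαA) (hs α (hA hαA)) (hz α hαA)
  refine Subgroup.closure_toSubmonoid_le_of_inv_mem hmem fun f hf => ?_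
  obtain ⟨α, hαA, rfl⟩ := hf
  rw [inv_eq_of_mul_eq_one_right (reflection_mul_self (hpair α (hA hαA)) (hs α (hA hαA)))]
  exact hmem ⟨α, hαA, rfl⟩

end CorootLattice

theorem exists_eq_addRight_mul {S : Set (Equiv.Perm V)} {Q : AddSubgroup V}
    (hlin : ∀ u ∈ Subgroup.closure S, IsLinearMap ℝ u)
    (hQ : ∀ u ∈ Subgroup.closure S, ∀ ℓ ∈ Q, u ℓ ∈ Q) {w : Equiv.Perm V}
    (hw : w ∈ Subgroup.closure (S ∪ (fun ℓ : V => Equiv.addRight ℓ) '' (Q : Set V))) :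
    ∃ m ∈ Q, ∃ u ∈ Subgroup.closure S, w = Equiv.addRight m * u := by
  induction hw using Subgroup.closure_induction with
  | mem g hg =>
    rcases hg with hg | ⟨ℓ, hℓ, rfl⟩
    · exact ⟨0, Q.zero_mem, g, Subgroup.subset_closure hg, by simp⟩
    · exact ⟨ℓ, hℓ, 1, Subgroup.one_mem _, by simp⟩
  | one => exact ⟨0, Q.zero_mem, 1, Subgroup.one_mem _, by simp⟩
  | mul a b _ _ ha hb =>
    obtain ⟨m, hm, u, hu, rfl⟩ := ha
    obtain ⟨m', hm', u', hu', rfl⟩ := hb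
    refine ⟨m + u m', Q.add_mem hm (hQ u hu m' hm'), u * u', Subgroup.mul_mem _ hu hu', ?_⟩
    ext v
    simp only [Equiv.Perm.mul_apply, Equiv.coe_addRight, (hlin u hu).map_add]
    abel
  | inv a _ ha =>
    obtain ⟨m, hm, u, hu, rfl⟩ := ha
    have hu' := Subgroup.inv_mem _ hu
    refine ⟨-(u⁻¹ m), Q.neg_mem (hQ _ hu' m hm), u⁻¹, hu', ?_⟩
    ext v
    simp only [mul_inv_rev, Equiv.neg_addRight, Equiv.Perm.mul_apply, Equiv.coe_addRight,
      (hlin _ hu').map_add, (hlin _ hu').map_neg]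

theorem addRight_mul_mul_inv_mem_closure {Φ A : Set (Module.Dual ℝ V)} (hA : A ⊆ Φ)
    {coroot : Module.Dual ℝ V → V} {s : Module.Dual ℝ V → Equiv.Perm V}
    (hs : ∀ α ∈ Φ, ∀ v : V, s α v = v - α v • coroot α) {r : Module.Dual ℝ V → V → Equiv.Perm V}
    (hr : ∀ α ∈ Φ, ∀ z v : V, r α z v = v - (α v - α z) • coroot α) (z : V)
    {P : Module.Dual ℝ V → Prop} (hP : ∀ α ∈ A, P α) {u : Equiv.Perm V}
    (hu : u ∈ Subgroup.closure (s '' A)) :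
    Equiv.addRight z * u * (Equiv.addRight z)⁻¹ ∈
      Subgroup.closure {g : Equiv.Perm V | ∃ α ∈ Φ, P α ∧ g = r α z} := by
  let conj := (MulAut.conj (Equiv.addRight z)).toMonoidHom
  have himg : conj '' (s '' A) ⊆ {g : Equiv.Perm V | ∃ α ∈ Φ, P α ∧ g = r α z} := by
    rintro _ ⟨_, ⟨α, hα, rfl⟩, rfl⟩
    refine ⟨α, hA hα, hP α hα, Equiv.ext fun v => ?_⟩
    simp only [conj, MulEquiv.coe_toMonoidHom, MulAut.conj_apply, Equiv.Perm.mul_apply,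
      Equiv.neg_addRight, Equiv.coe_addRight, hs α (hA hα), hr α (hA hα), map_add, map_neg]
    module
  have h := Subgroup.mem_map_of_mem conj hu
  rw [MonoidHom.map_closure] at h
  exact Subgroup.closure_mono himg h

theorem sub_add_apply_mem {Φ : Set (Module.Dual ℝ V)} {Q : AddSubgroup V} {x y m : V}
    {g u : Equiv.Perm V} (hg : IsLatticeSymmetry Φ Q x g)
    (hgu : IsLatticeSymmetry Φ Q y (g * u⁻¹)) (hu : ∀ ℓ ∈ Q, u⁻¹ ℓ ∈ Q) (hm : m ∈ Q) :
    y - x + g (x + u⁻¹ m - u⁻¹ y) ∈ Q := by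
  have hsplit : y - x + g (x + u⁻¹ m - u⁻¹ y) = (y - (g * u⁻¹) y) + -(x - g x) + g (u⁻¹ m) := by
    simp only [Equiv.Perm.mul_apply, hg.isLinearMap.map_add, hg.isLinearMap.map_sub]
    abel
  rw [hsplit]
  exact add_mem (add_mem hgu.sub_mem (neg_mem hg.sub_mem)) (hg.mapsTo _ (hu m hm))

theorem addRight_eq_mul_mul {g u : Equiv.Perm V} (hg : IsLinearMap ℝ g)
    (hu : IsLinearMap ℝ ⇑u⁻¹) (x y m : V) :
    Equiv.addRight (y - x + g (x + u⁻¹ m - u⁻¹ y)) =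
      (Equiv.addRight y * (g * u⁻¹) * (Equiv.addRight y)⁻¹) * (Equiv.addRight m * u) *
        (Equiv.addRight x * g⁻¹ * (Equiv.addRight x)⁻¹) := by
  rw [Equiv.neg_addRight, Equiv.neg_addRight]
  ext v
  simp only [Equiv.Perm.inv_def] at hu ⊢
  simp only [Equiv.Perm.mul_apply, Equiv.coe_addRight, hg.map_add,
    hg.map_sub, hg.map_neg, hu.map_add, hu.map_neg, Equiv.symm_apply_apply, Equiv.apply_symm_apply]
  abel

end AffineWeyl

theorem stmt_0_general (V : Type*) [AddCommGroup V] [Module ℝ V]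
    (Φ : Set (Module.Dual ℝ V)) (hfin : Φ.Finite)
    (hspan : Submodule.span ℝ Φ = ⊤)
    (coroot : Module.Dual ℝ V → V)
    (hpair : ∀ α ∈ Φ, α (coroot α) = 2)
    (hrefl : ∀ α ∈ Φ, ∀ β ∈ Φ, β - β (coroot α) • α ∈ Φ)
    (hcrys : ∀ α ∈ Φ, ∀ β ∈ Φ, ∃ n : ℤ, β (coroot α) = (n : ℝ))
    -- the linear reflections `s α : v ↦ v − α(v) α^∨` for `α ∈ Φ`
    (s : Module.Dual ℝ V → Equiv.Perm V)
    (hs : ∀ α ∈ Φ, ∀ v : V, s α v = v - α v • coroot α)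
    -- the affine reflections `r α z : v ↦ v − (α(v) − α(z)) α^∨` for `α ∈ Φ`
    (r : Module.Dual ℝ V → V → Equiv.Perm V)
    (hr : ∀ α ∈ Φ, ∀ z v : V, r α z v = v - (α v - α z) • coroot α)
    -- a positive system `Pos = Φ^+ ⊆ Φ`
    (Pos : Set (Module.Dual ℝ V))
    (hPos : ∃ v0 : V, (∀ α ∈ Φ, α v0 ≠ 0) ∧ Pos = {α ∈ Φ | 0 < α v0})
    (x y : V)
    -- `y` is special
    (hy : ∀ α ∈ Φ, ∃ n : ℤ, α y = (n : ℝ)) :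
    ∀ w ∈ Subgroup.closure
        (s '' Φ ∪ (fun ℓ : V => Equiv.addRight ℓ) ''
          ((AddSubgroup.closure (coroot '' Φ) : AddSubgroup V) : Set V)),
      ∃ ℓ : V, ℓ ∈ AddSubgroup.closure (coroot '' Φ) ∧
        (∀ α ∈ Pos, (∃ n : ℤ, α x = (n : ℝ)) → α (y - x) ≤ α ℓ) ∧
        ∃ wy ∈ Subgroup.closure
            {g : Equiv.Perm V | ∃ α ∈ Φ, (∃ n : ℤ, α y = (n : ℝ)) ∧ g = r α y},
          ∃ wx ∈ Subgroup.closure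
            {g : Equiv.Perm V | ∃ α ∈ Φ, (∃ n : ℤ, α x = (n : ℝ)) ∧ g = r α x},
            Equiv.addRight ℓ = wy * w * wx := by
  open AffineWeyl in
  intro w hw
  obtain ⟨v0, -, rfl⟩ := hPos
  set Φx := {α ∈ Φ | ∃ n : ℤ, α x = (n : ℝ)}
  have hW₀ := closure_reflections_le hpair hrefl hcrys hs subset_rfl hy
  have hWx := closure_reflections_le hpair hrefl hcrys hs (A := Φx) (Set.sep_subset _ _)
    (z := x) fun α hα => hα.2
  have hWxW₀ : Subgroup.closure (s '' Φx) ≤ Subgroup.closure (s '' Φ) :=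
    Subgroup.closure_mono (Set.image_mono (Set.sep_subset _ _))
  obtain ⟨m, hm, u, hu, rfl⟩ := exists_eq_addRight_mul (fun u hu => (hW₀ hu).isLinearMap)
    (fun u hu => (hW₀ hu).mapsTo) hw
  have hfinW₀ := finite_of_forall_comp_mem hfin hspan fun g hg => (hW₀ hg).comp_mem
  set p := x + u⁻¹ m - u⁻¹ y
  obtain ⟨g, hg, hdom⟩ := exists_mem_forall_nonneg (hfinW₀.subset hWxW₀)
    (rootForm hfin.toFinset v0) (A := {α ∈ Φx | 0 < α v0}) coroot s (fun α hα => hs α hα.1.1)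
    (fun α hα => Subgroup.subset_closure ⟨α, hα.1, rfl⟩)
    (fun α hα => rootForm_coroot_pos (hpair α hα.1.1) (by simpa using hα.1.1)
      (by simpa using hrefl α hα.1.1) hα.2) p
  have hgu : g * u⁻¹ ∈ Subgroup.closure (s '' Φ) :=
    Subgroup.mul_mem _ (hWxW₀ hg) (Subgroup.inv_mem _ hu)
  have hu' := hW₀ (Subgroup.inv_mem _ hu)
  refine ⟨y - x + g p, sub_add_apply_mem (hWx hg) (hW₀ hgu) hu'.mapsTo hm,
    fun α hα hαx => ?_, _, addRight_mul_mul_inv_mem_closure subset_rfl hs hr y hy hgu, _,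
    addRight_mul_mul_inv_mem_closure (Set.sep_subset _ _) hs hr x (fun α hα => hα.2)
      (Subgroup.inv_mem _ hg),
    addRight_eq_mul_mul (hWx hg).isLinearMap hu'.isLinearMap x y m⟩
  rw [map_add, le_add_iff_nonneg_right]
  exact hdom α ⟨⟨hα.1, hαx⟩, hα.2⟩

/-- Let `Φ ⊂ V*` be a finite reduced crystallographic root system spanning `V*`, with
coroot lattice `Q`, finite Weyl group `W₀` generated by the reflections `s α`, and affine
Weyl group `W` generated by `W₀` together with the translations `t(ℓ) = Equiv.addRight ℓ`
for `ℓ ∈ Q`.  Fix a positive system `Pos ⊆ Φ`.  Let `x ∈ V` and let `y ∈ V` be special.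
Then for every `w ∈ W` there exists `ℓ ∈ X_{x,y}^+` (i.e. `ℓ ∈ Q` with
`α(ℓ) ≥ α(y − x)` for all `α ∈ Φ_x^{lin,+}`) such that the translation `t(ℓ)` lies in
the double coset `W_y w W_x`. -/
theorem stmt_0 (V : Type*) [AddCommGroup V] [Module ℝ V] [FiniteDimensional ℝ V]
    (Φ : Set (Module.Dual ℝ V)) (hfin : Φ.Finite) (h0 : (0 : Module.Dual ℝ V) ∉ Φ)
    (hspan : Submodule.span ℝ Φ = ⊤)
    (coroot : Module.Dual ℝ V → V)
    (hpair : ∀ α ∈ Φ, α (coroot α) = 2)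
    (hreflco : ∀ α ∈ Φ, ∀ β ∈ Φ, coroot β - α (coroot β) • coroot α ∈ coroot '' Φ)
    (hrefl : ∀ α ∈ Φ, ∀ β ∈ Φ, β - β (coroot α) • α ∈ Φ)
    (hcrys : ∀ α ∈ Φ, ∀ β ∈ Φ, ∃ n : ℤ, β (coroot α) = (n : ℝ))
    (hred : ∀ α ∈ Φ, ∀ c : ℝ, c • α ∈ Φ → c = 1 ∨ c = -1)
    -- the linear reflections `s α : v ↦ v − α(v) α^∨` for `α ∈ Φ`
    (s : Module.Dual ℝ V → Equiv.Perm V)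
    (hs : ∀ α ∈ Φ, ∀ v : V, s α v = v - α v • coroot α)
    -- the affine reflections `r α z : v ↦ v − (α(v) − α(z)) α^∨` for `α ∈ Φ`
    (r : Module.Dual ℝ V → V → Equiv.Perm V)
    (hr : ∀ α ∈ Φ, ∀ z v : V, r α z v = v - (α v - α z) • coroot α)
    -- a positive system `Pos = Φ^+ ⊆ Φ`
    (Pos : Set (Module.Dual ℝ V))
    (hPos : ∃ v0 : V, (∀ α ∈ Φ, α v0 ≠ 0) ∧ Pos = {α ∈ Φ | 0 < α v0})
    (x y : V)
    -- `y` is special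
    (hy : ∀ α ∈ Φ, ∃ n : ℤ, α y = (n : ℝ)) :
    ∀ w ∈ Subgroup.closure
        (s '' Φ ∪ (fun ℓ : V => Equiv.addRight ℓ) ''
          ((AddSubgroup.closure (coroot '' Φ) : AddSubgroup V) : Set V)),
      ∃ ℓ : V, ℓ ∈ AddSubgroup.closure (coroot '' Φ) ∧
        (∀ α ∈ Pos, (∃ n : ℤ, α x = (n : ℝ)) → α (y - x) ≤ α ℓ) ∧
        ∃ wy ∈ Subgroup.closure
            {g : Equiv.Perm V | ∃ α ∈ Φ, (∃ n : ℤ, α y = (n : ℝ)) ∧ g = r α y},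
          ∃ wx ∈ Subgroup.closure
            {g : Equiv.Perm V | ∃ α ∈ Φ, (∃ n : ℤ, α x = (n : ℝ)) ∧ g = r α x},
            Equiv.addRight ℓ = wy * w * wx :=
  stmt_0_general V Φ hfin hspan coroot hpair hrefl hcrys s hs r hr Pos hPos x y hy
end

section
/- Let x ∈ V and let y ∈ V be special. If ℓ, ℓ' ∈ X_{x,y}^+ are such that there exist w_y ∈ W_y and w_x ∈ W_x with t(ℓ') = w_y ∘ t(ℓ) ∘ w_x, then ℓ = ℓ'. Hence distinct elements of X_{x,y}^+ give translations lying in distinct (W_y, W_x)-double cosets of W. -/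
/-!
Evaluating `t(ℓ') = w_y ∘ t(ℓ) ∘ w_x` at `x` and comparing linear parts shows that the linear
parts of `w_y` and `w_x` are mutually inverse and that `ℓ' - (y - x) = w (ℓ - (y - x))` for some
`w` in the Weyl group of the integral subsystem `Φ_x^lin`. Both vectors are dominant for
`Φ_x^{lin,+}`, so it suffices that each orbit of a finite reflection group meets the closed
dominant chamber only once.

For that, the coroots of `Φ_x^lin` are viewed as root vectors for the invariant form
`∑_{α ∈ Φ} α(v) α(w)`. A set of positive roots of least size whose cone contains all positive
roots is a simple system: each simple reflection permutes the other positive roots, so every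
reflection is a word in simple reflections, and the exchange condition holds. If a word ending
in `s_d` sends a dominant `p` to a dominant `q`, then either the exchange condition shortens the
word, or the word sends `d` to a negative root, whence `⟨d, p⟩ ≤ 0 ≤ ⟨d, p⟩` and `s_d` fixes `p`;
induction on the length of the word gives `p = q`.
-/

section Reflection

variable {V : Type*} [AddCommGroup V] [Module ℝ V] {B : LinearMap.BilinForm ℝ V}

variable (B) in
/-- If `B a a = 0` the map is the identity (`2 / 0 = 0`), so no hypothesis on `a` is needed. -/
lemma involutive_preReflection_two_div_smul (a : V) :
    Function.Involutive (Module.preReflection a ((2 / B a a) • B a)) := by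
  by_cases ha : B a a = 0
  · simp [Function.Involutive, Module.preReflection_apply, ha]
  · exact Module.involutive_preReflection (by simp [ha])

variable (B) in
noncomputable def orthoReflection (a : V) : V ≃ₗ[ℝ] V :=
  LinearEquiv.ofInvolutive _ (involutive_preReflection_two_div_smul B a)

lemma orthoReflection_apply (a v : V) :
    orthoReflection B a v = v - (2 / B a a * B a v) • a := by
  rw [orthoReflection, LinearEquiv.coe_ofInvolutive, Module.preReflection_apply]
  simp

lemma orthoReflection_apply_self {a : V} (ha : B a a ≠ 0) : orthoReflection B a a = -a := by
  rw [orthoReflection_apply, div_mul_cancel₀ _ ha]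
  module

lemma orthoReflection_apply_of_eq_zero {a v : V} (h : B a v = 0) :
    orthoReflection B a v = v := by
  simp [orthoReflection_apply, h]

lemma orthoReflection_neg (a : V) : orthoReflection B (-a) = orthoReflection B a := by
  ext v
  simp [orthoReflection_apply]

lemma orthoReflection_mul_self (a : V) : orthoReflection B a * orthoReflection B a = 1 :=
  LinearEquiv.ext (involutive_preReflection_two_div_smul B a)

@[simp]
lemma orthoReflection_orthoReflection (a v : V) :
    orthoReflection B a (orthoReflection B a v) = v := by
  rw [← LinearEquiv.mul_apply, orthoReflection_mul_self, LinearEquiv.coe_one, id]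

@[simp]
lemma orthoReflection_inv (a : V) : (orthoReflection B a)⁻¹ = orthoReflection B a :=
  inv_eq_of_mul_eq_one_right (orthoReflection_mul_self a)

lemma orthoReflection_isometry (hB : B.IsSymm) (a v w : V) :
    B (orthoReflection B a v) (orthoReflection B a w) = B v w := by
  by_cases ha : B a a = 0
  · simp [orthoReflection_apply, ha]
  simp only [orthoReflection_apply, map_sub, map_smul, LinearMap.sub_apply,
    LinearMap.smul_apply, smul_eq_mul, hB.eq v a]
  field_simp
  ring

lemma orthoReflection_map {g : V ≃ₗ[ℝ] V} (hg : ∀ v w, B (g v) (g w) = B v w) (a : V) :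
    orthoReflection B (g a) = g * orthoReflection B a * g⁻¹ := by
  ext v
  have hv : B (g a) v = B a (g⁻¹ v) := by
    rw [← hg a (g⁻¹ v), LinearEquiv.coe_inv, LinearEquiv.apply_symm_apply]
  simp only [LinearEquiv.mul_apply, orthoReflection_apply, map_sub, map_smul, hg, hv,
    LinearEquiv.coe_inv, LinearEquiv.apply_symm_apply]

end Reflection

section ReflectionGroup

variable {V : Type*} [AddCommGroup V] [Module ℝ V] {B : LinearMap.BilinForm ℝ V}

variable (B) in
def reflectionGroup (R : Set V) : Subgroup (V ≃ₗ[ℝ] V) :=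
  Subgroup.closure (orthoReflection B '' R)

variable {R : Set V} {w : V ≃ₗ[ℝ] V}

lemma isometry_of_mem_reflectionGroup (hB : B.IsSymm) (hw : w ∈ reflectionGroup B R)
    (v u : V) : B (w v) (w u) = B v u := by
  induction hw using Subgroup.closure_induction generalizing v u with
  | mem g hg =>
    obtain ⟨a, -, rfl⟩ := hg
    exact orthoReflection_isometry hB a v u
  | one => rfl
  | mul g g' _ _ hg hg' => rw [LinearEquiv.mul_apply, LinearEquiv.mul_apply, hg, hg']
  | inv g _ hg => rw [← hg, LinearEquiv.coe_inv, g.apply_symm_apply, g.apply_symm_apply]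

lemma apply_mem_iff_of_mem_reflectionGroup
    (hR : ∀ a ∈ R, ∀ b ∈ R, orthoReflection B a b ∈ R) (hw : w ∈ reflectionGroup B R)
    (v : V) : w v ∈ R ↔ v ∈ R := by
  induction hw using Subgroup.closure_induction generalizing v with
  | mem g hg =>
    obtain ⟨a, ha, rfl⟩ := hg
    refine ⟨fun h => ?_, hR a ha v⟩
    simpa using hR a ha _ h
  | one => rfl
  | mul g g' _ _ hg hg' => rw [LinearEquiv.mul_apply, hg, hg']
  | inv g _ hg => rw [← hg, LinearEquiv.coe_inv, g.apply_symm_apply]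

end ReflectionGroup

section RootVectorSystem

variable {V : Type*} [AddCommGroup V] [Module ℝ V]

structure IsRootVectorSystem (B : LinearMap.BilinForm ℝ V) (R : Finset V) : Prop where
  isSymm : B.IsSymm
  pos : ∀ a ∈ R, 0 < B a a
  orthoReflection_mem : ∀ a ∈ R, ∀ b ∈ R, orthoReflection B a b ∈ R
  reduced : ∀ a ∈ R, ∀ b ∈ R, ∀ t : ℝ, b = t • a → t = 1 ∨ t = -1

noncomputable def posRoots (R : Finset V) (h : Module.Dual ℝ V) : Finset V :=
  R.filter (0 < h ·)

lemma mem_posRoots {R : Finset V} {h : Module.Dual ℝ V} {a : V} :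
    a ∈ posRoots R h ↔ a ∈ R ∧ 0 < h a :=
  Finset.mem_filter

def IsDominant (B : LinearMap.BilinForm ℝ V) (R : Finset V) (h : Module.Dual ℝ V) (p : V) :
    Prop :=
  ∀ a ∈ posRoots R h, 0 ≤ B a p

namespace IsRootVectorSystem

variable {B : LinearMap.BilinForm ℝ V} {R : Finset V}

lemma neg_mem (hR : IsRootVectorSystem B R) {a : V} (ha : a ∈ R) : -a ∈ R := by
  simpa [orthoReflection_apply_self (hR.pos a ha).ne'] using hR.orthoReflection_mem a ha a ha

lemma isometry_of_mem_reflectionGroup (hR : IsRootVectorSystem B R) {w : V ≃ₗ[ℝ] V}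
    (hw : w ∈ reflectionGroup B R) (v u : V) : B (w v) (w u) = B v u :=
  _root_.isometry_of_mem_reflectionGroup hR.isSymm hw v u

lemma apply_mem_of_mem_reflectionGroup (hR : IsRootVectorSystem B R) {w : V ≃ₗ[ℝ] V}
    (hw : w ∈ reflectionGroup B R) {a : V} (ha : a ∈ R) : w a ∈ R :=
  (apply_mem_iff_of_mem_reflectionGroup hR.orthoReflection_mem hw a).2 ha

lemma mem_posRoots_or_neg_mem_posRoots (hR : IsRootVectorSystem B R) {h : Module.Dual ℝ V}
    (hreg : ∀ a ∈ R, h a ≠ 0) {a : V} (ha : a ∈ R) :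
    a ∈ posRoots R h ∨ -a ∈ posRoots R h := by
  rcases (hreg a ha).lt_or_gt with hneg | hpos
  · exact Or.inr (mem_posRoots.2 ⟨hR.neg_mem ha, by simpa using hneg⟩)
  · exact Or.inl (mem_posRoots.2 ⟨ha, hpos⟩)

end IsRootVectorSystem

end RootVectorSystem

lemma PointedCone.mem_hull_finset_iff {V : Type*} [AddCommGroup V] [Module ℝ V]
    {s : Finset V} {x : V} :
    x ∈ PointedCone.hull ℝ (s : Set V) ↔ ∃ c : V → ℝ, (∀ d, 0 ≤ c d) ∧ ∑ d ∈ s, c d • d = x := by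
  constructor
  · intro hx
    obtain ⟨f, -, rfl⟩ := Submodule.mem_span_finset.1 hx
    exact ⟨fun d => f d, fun d => (f d).2, by simp⟩
  · rintro ⟨c, hc, rfl⟩
    exact Submodule.sum_mem _ fun d hd =>
      PointedCone.smul_mem _ (hc d) (PointedCone.subset_hull hd)

lemma Subgroup.exists_list_prod_eq_of_inv_subset {G : Type*} [Group G] {S : Set G}
    (hS : S⁻¹ ⊆ S) {w : G} (hw : w ∈ Subgroup.closure S) :
    ∃ L : List G, (∀ g ∈ L, g ∈ S) ∧ L.prod = w := by
  rw [← Subgroup.mem_toSubmonoid, Subgroup.closure_toSubmonoid, Set.union_eq_left.2 hS] at hw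
  exact Submonoid.exists_list_of_mem_closure hw

section SimpleSystem

variable {V : Type*} [AddCommGroup V] [Module ℝ V]

structure IsSimpleSystem (R : Finset V) (h : Module.Dual ℝ V) (Δ : Finset V) : Prop where
  subset_posRoots : Δ ⊆ posRoots R h
  posRoots_subset_hull : ∀ b ∈ posRoots R h, b ∈ PointedCone.hull ℝ (Δ : Set V)
  notMem_hull_diff : ∀ a ∈ Δ, a ∉ PointedCone.hull ℝ ((Δ : Set V) \ {a})

/-- A generating set of positive roots of least cardinality is a simple system. -/
lemma exists_isSimpleSystem (R : Finset V) (h : Module.Dual ℝ V) :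
    ∃ Δ, IsSimpleSystem R h Δ := by
  classical
  obtain ⟨Δ, hΔ, hmin⟩ := Finset.exists_min_image ((posRoots R h).powerset.filter
    fun S : Finset V => ∀ b ∈ posRoots R h, b ∈ PointedCone.hull ℝ (S : Set V)) Finset.card
    ⟨posRoots R h, by simpa using fun b hb => PointedCone.subset_hull (Finset.mem_coe.2 hb)⟩
  simp only [Finset.mem_filter, Finset.mem_powerset] at hΔ hmin
  refine ⟨Δ, hΔ.1, hΔ.2, fun a ha hmem => ?_⟩
  have hle : PointedCone.hull ℝ (Δ : Set V) ≤ PointedCone.hull ℝ (Δ.erase a : Set V) := by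
    refine Submodule.span_le.2 fun d hd => ?_
    by_cases hda : d = a
    · rw [hda, Finset.coe_erase]
      exact hmem
    · exact PointedCone.subset_hull (Finset.mem_erase.2 ⟨hda, hd⟩)
  have hcard := hmin (Δ.erase a)
    ⟨(Finset.erase_subset a Δ).trans hΔ.1, fun b hb => hle (hΔ.2 b hb)⟩
  rw [Finset.card_erase_of_mem ha] at hcard
  have := Finset.card_pos.2 ⟨a, ha⟩
  omega

namespace IsSimpleSystem

variable {R Δ : Finset V} {h : Module.Dual ℝ V}

lemma mem (hΔ : IsSimpleSystem R h Δ) {d : V} (hd : d ∈ Δ) : d ∈ R :=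
  (mem_posRoots.1 (hΔ.subset_posRoots hd)).1

lemma pos (hΔ : IsSimpleSystem R h Δ) {d : V} (hd : d ∈ Δ) : 0 < h d :=
  (mem_posRoots.1 (hΔ.subset_posRoots hd)).2

lemma exists_sum_eq (hΔ : IsSimpleSystem R h Δ) {b : V} (hb : b ∈ posRoots R h) :
    ∃ c : V → ℝ, (∀ d, 0 ≤ c d) ∧ ∑ d ∈ Δ, c d • d = b :=
  PointedCone.mem_hull_finset_iff.1 (hΔ.posRoots_subset_hull b hb)

lemma coeff_eq_zero (hΔ : IsSimpleSystem R h Δ) {a : V} (ha : a ∈ Δ) {t : ℝ}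
    {c : V → ℝ} (hc : ∀ d, 0 ≤ c d) (hsum : ∑ d ∈ Δ, c d • d = t • a)
    {d : V} (hd : d ∈ Δ) (hda : d ≠ a) : c d = 0 := by
  classical
  by_contra hcd
  have hsplit : c a • a + ∑ e ∈ Δ.erase a, c e • e = t • a := by
    rw [Finset.add_sum_erase Δ (fun e => c e • e) ha, hsum]
  rcases lt_or_ge (c a) t with hlt | hge
  · apply hΔ.notMem_hull_diff a ha
    rw [← Finset.coe_erase]
    have hrest : ∑ e ∈ Δ.erase a, c e • e = (t - c a) • a := by
      rw [sub_smul, ← hsplit]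
      abel
    refine PointedCone.mem_hull_finset_iff.2 ⟨fun e => (t - c a)⁻¹ * c e,
      fun e => mul_nonneg (inv_nonneg.2 (by linarith)) (hc e), ?_⟩
    simp_rw [mul_smul, ← Finset.smul_sum, hrest, smul_smul,
      inv_mul_cancel₀ (by linarith : t - c a ≠ 0), one_smul]
  · have hrest : 0 < ∑ e ∈ Δ.erase a, c e * h e :=
      Finset.sum_pos' (fun e he => mul_nonneg (hc e) (hΔ.pos (Finset.mem_of_mem_erase he)).le)
        ⟨d, Finset.mem_erase.2 ⟨hda, hd⟩, mul_pos ((hc d).lt_of_ne' hcd) (hΔ.pos hd)⟩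
    have hheight := congrArg h hsplit
    simp only [map_add, map_sum, map_smul, smul_eq_mul] at hheight
    nlinarith [mul_nonneg (sub_nonneg.2 hge) (hΔ.pos ha).le]

variable {B : LinearMap.BilinForm ℝ V}

lemma orthoReflection_mem_posRoots (hΔ : IsSimpleSystem R h Δ) (hR : IsRootVectorSystem B R)
    (hreg : ∀ a ∈ R, h a ≠ 0) {a b : V} (ha : a ∈ Δ) (hb : b ∈ posRoots R h) (hba : b ≠ a) :
    orthoReflection B a b ∈ posRoots R h := by
  have haR := hΔ.mem ha
  have hbR := (mem_posRoots.1 hb).1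
  refine (hR.mem_posRoots_or_neg_mem_posRoots hreg
    (hR.orthoReflection_mem a haR b hbR)).resolve_right fun hneg => ?_
  set μ := 2 / B a a * B a b
  have hs : orthoReflection B a b = b - μ • a := orthoReflection_apply a b
  -- `b` and `-(s_a b)` are positive roots summing to `μ a`
  obtain ⟨c, hc, hcb⟩ := hΔ.exists_sum_eq hb
  obtain ⟨e, he, hes⟩ := hΔ.exists_sum_eq hneg
  have hsum : ∑ d ∈ Δ, (c d + e d) • d = μ • a := by
    simp_rw [add_smul, Finset.sum_add_distrib, hcb, hes, hs]
    abel
  have hc0 : ∀ d ∈ Δ, d ≠ a → c d • d = 0 := fun d hd hda => by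
    have := hΔ.coeff_eq_zero ha (fun d => add_nonneg (hc d) (he d)) hsum hd hda
    rw [show c d = 0 by linarith [hc d, he d], zero_smul]
  have hbca : b = c a • a := by rw [← hcb, Finset.sum_eq_single_of_mem a ha hc0]
  rcases hR.reduced a haR b hbR (c a) hbca with h1 | h1
  · exact hba (by rw [hbca, h1, one_smul])
  · have hbpos := (mem_posRoots.1 hb).2
    rw [hbca, h1, map_smul, smul_eq_mul] at hbpos
    linarith [hΔ.pos ha]

lemma exists_orthoReflection_lt (hΔ : IsSimpleSystem R h Δ) (hR : IsRootVectorSystem B R)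
    (hreg : ∀ a ∈ R, h a ≠ 0) {b : V} (hb : b ∈ posRoots R h) (hbΔ : b ∉ Δ) :
    ∃ d ∈ Δ, orthoReflection B d b ∈ posRoots R h ∧ h (orthoReflection B d b) < h b := by
  obtain ⟨c, hc, hcb⟩ := hΔ.exists_sum_eq hb
  -- expanding `0 < B b b` along the simple roots gives a simple `d` with `0 < B d b`
  have hbb : ∑ d ∈ Δ, (0 : ℝ) < ∑ d ∈ Δ, c d * B b d := by
    have := hR.pos b (mem_posRoots.1 hb).1
    nth_rw 2 [← hcb] at this
    simpa [map_sum] using this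
  obtain ⟨d, hd, hpos⟩ := Finset.exists_lt_of_sum_lt hbb
  have hdb : 0 < 2 / B d d * B d b := by
    have := hR.pos d (hΔ.mem hd)
    have : 0 < B d b := by rw [hR.isSymm.eq]; exact pos_of_mul_pos_right hpos (hc d)
    positivity
  refine ⟨d, hd, hΔ.orthoReflection_mem_posRoots hR hreg hd hb fun hbd => hbΔ (hbd ▸ hd), ?_⟩
  rw [orthoReflection_apply, map_sub, map_smul, smul_eq_mul]
  nlinarith [hΔ.pos hd]

lemma orthoReflection_mem_closure (hΔ : IsSimpleSystem R h Δ) (hR : IsRootVectorSystem B R)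
    (hreg : ∀ a ∈ R, h a ≠ 0) {b : V} (hb : b ∈ R) :
    orthoReflection B b ∈ Subgroup.closure (orthoReflection B '' Δ) := by
  classical
  wlog hpos : b ∈ posRoots R h generalizing b
  · simpa [orthoReflection_neg] using this (hR.neg_mem hb)
      ((hR.mem_posRoots_or_neg_mem_posRoots hreg hb).resolve_left hpos)
  -- a counterexample of least height would produce one of smaller height
  by_contra hb'
  obtain ⟨b₀, hb₀, hmin⟩ := Finset.exists_min_image ((posRoots R h).filter fun b =>
      orthoReflection B b ∉ Subgroup.closure (orthoReflection B '' Δ)) h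
    ⟨b, Finset.mem_filter.2 ⟨hpos, hb'⟩⟩
  rw [Finset.mem_filter] at hb₀
  have hb₀Δ : b₀ ∉ Δ := fun hmem => hb₀.2 (Subgroup.subset_closure ⟨b₀, hmem, rfl⟩)
  obtain ⟨d, hd, hdpos, hlt⟩ := hΔ.exists_orthoReflection_lt hR hreg hb₀.1 hb₀Δ
  have hmem : orthoReflection B (orthoReflection B d b₀) ∈
      Subgroup.closure (orthoReflection B '' Δ) := by
    by_contra hn
    exact (hmin _ (Finset.mem_filter.2 ⟨hdpos, hn⟩)).not_gt hlt
  have hd' : orthoReflection B d ∈ Subgroup.closure (orthoReflection B '' Δ) :=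
    Subgroup.subset_closure ⟨d, hd, rfl⟩
  apply hb₀.2
  have := orthoReflection_map (orthoReflection_isometry hR.isSymm d) (orthoReflection B d b₀)
  rw [orthoReflection_orthoReflection] at this
  rw [this]
  exact mul_mem (mul_mem hd' hmem) (inv_mem hd')

lemma reflectionGroup_le (hΔ : IsSimpleSystem R h Δ) (hR : IsRootVectorSystem B R)
    (hreg : ∀ a ∈ R, h a ≠ 0) :
    reflectionGroup B R ≤ Subgroup.closure (orthoReflection B '' Δ) :=
  Subgroup.closure_le _ |>.2 <| by
    rintro _ ⟨b, hb, rfl⟩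
    exact hΔ.orthoReflection_mem_closure hR hreg hb

lemma list_prod_mem_reflectionGroup (hΔ : IsSimpleSystem R h Δ) {L : List (V ≃ₗ[ℝ] V)}
    (hL : ∀ g ∈ L, g ∈ orthoReflection B '' Δ) : L.prod ∈ reflectionGroup B R :=
  Subgroup.list_prod_mem _ fun g hg => Subgroup.subset_closure <|
    Set.image_mono (fun _ hd => hΔ.mem hd) (hL g hg)

/-- The exchange condition. -/
lemma exists_shorter_word (hΔ : IsSimpleSystem R h Δ) (hR : IsRootVectorSystem B R)
    (hreg : ∀ a ∈ R, h a ≠ 0) :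
    ∀ {L : List (V ≃ₗ[ℝ] V)}, (∀ g ∈ L, g ∈ orthoReflection B '' Δ) →
      ∀ {x : V}, x ∈ posRoots R h → h (L.prod x) < 0 →
      ∃ L' : List (V ≃ₗ[ℝ] V), (∀ g ∈ L', g ∈ orthoReflection B '' Δ) ∧
        L'.length < L.length ∧ L.prod * orthoReflection B x = L'.prod
  | [], _, x, hx, hneg => absurd hneg (by simpa using (mem_posRoots.1 hx).2.le)
  | g :: M, hL, x, hx, hneg => by
    obtain ⟨a, ha, rfl⟩ := hL g List.mem_cons_self
    have hM : ∀ g ∈ M, g ∈ orthoReflection B '' Δ :=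
      fun g hg => hL g (List.mem_cons_of_mem _ hg)
    have hMW := hΔ.list_prod_mem_reflectionGroup hM
    have hyR : M.prod x ∈ R := hR.apply_mem_of_mem_reflectionGroup hMW (mem_posRoots.1 hx).1
    rcases (hreg _ hyR).lt_or_gt with hy | hy
    · obtain ⟨M', hM', hlen, heq⟩ := exists_shorter_word hΔ hR hreg hM hx hy
      refine ⟨orthoReflection B a :: M', ?_, by simpa using hlen, ?_⟩
      · rintro g (_ | ⟨_, hg⟩)
        exacts [⟨a, ha, rfl⟩, hM' g hg]
      · rw [List.prod_cons, mul_assoc, heq, List.prod_cons]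
    · -- `M x` is a positive root made negative by `s_a`, so it is `a` and `s_a = M s_x M⁻¹`
      have hya : M.prod x = a := by
        by_contra hne
        have := (mem_posRoots.1 (hΔ.orthoReflection_mem_posRoots hR hreg ha
          (mem_posRoots.2 ⟨hyR, hy⟩) hne)).2
        rw [List.prod_cons, LinearEquiv.mul_apply] at hneg
        linarith
      refine ⟨M, hM, by simp, ?_⟩
      rw [List.prod_cons, ← hya, orthoReflection_map (hR.isometry_of_mem_reflectionGroup hMW)]
      simp [mul_assoc, orthoReflection_mul_self]

lemma eq_of_list_prod_apply_eq (hΔ : IsSimpleSystem R h Δ) (hR : IsRootVectorSystem B R)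
    (hreg : ∀ a ∈ R, h a ≠ 0) {p q : V} (hp : IsDominant B R h p) (hq : IsDominant B R h q)
    (L : List (V ≃ₗ[ℝ] V)) (hL : ∀ g ∈ L, g ∈ orthoReflection B '' Δ) (hpq : L.prod p = q) :
    p = q := by
  induction hn : L.length using Nat.strong_induction_on generalizing L with
  | _ n ih =>
  rcases L.eq_nil_or_concat with rfl | ⟨M, g, rfl⟩
  · simpa using hpq
  obtain ⟨d, hd, rfl⟩ := hL g (by simp)
  have hM : ∀ g ∈ M, g ∈ orthoReflection B '' Δ := fun g hg => hL g (by simp [hg])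
  have hMW := hΔ.list_prod_mem_reflectionGroup hM
  simp only [List.concat_eq_append, List.length_append, List.length_singleton] at hn
  rw [List.concat_eq_append, List.prod_append, List.prod_singleton] at hpq
  have hdR := hΔ.mem hd
  rcases (hreg _ (hR.apply_mem_of_mem_reflectionGroup hMW hdR)).lt_or_gt with hneg | hpos
  · obtain ⟨M', hM', hlen, heq⟩ :=
      hΔ.exists_shorter_word hR hreg hM (hΔ.subset_posRoots hd) hneg
    exact ih M'.length (by omega) M' hM' (by rwa [← heq]) rfl
  · -- the last letter fixes `p`, since `p` and `q` are both dominant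
    have hwd : (M.prod * orthoReflection B d) d = -M.prod d := by
      rw [LinearEquiv.mul_apply, orthoReflection_apply_self (hR.pos d hdR).ne', map_neg]
    have hle : B d p ≤ 0 := by
      rw [← hR.isometry_of_mem_reflectionGroup (mul_mem hMW (Subgroup.subset_closure
        ⟨d, hdR, rfl⟩)) d p, hpq, hwd, map_neg, LinearMap.neg_apply, neg_nonpos]
      exact hq _ (mem_posRoots.2 ⟨hR.apply_mem_of_mem_reflectionGroup hMW hdR, hpos⟩)
    have hfix :=
      orthoReflection_apply_of_eq_zero (le_antisymm hle (hp d (hΔ.subset_posRoots hd)))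
    rw [LinearEquiv.mul_apply, hfix] at hpq
    exact ih M.length (by omega) M hM hpq rfl

end IsSimpleSystem

end SimpleSystem

theorem IsRootVectorSystem.eq_of_isDominant {V : Type*} [AddCommGroup V] [Module ℝ V]
    {B : LinearMap.BilinForm ℝ V} {R : Finset V} (hR : IsRootVectorSystem B R)
    {h : Module.Dual ℝ V} (hreg : ∀ a ∈ R, h a ≠ 0) {w : V ≃ₗ[ℝ] V}
    (hw : w ∈ reflectionGroup B R) {p q : V} (hp : IsDominant B R h p)
    (hq : IsDominant B R h q) (hpq : w p = q) : p = q := by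
  obtain ⟨Δ, hΔ⟩ := exists_isSimpleSystem R h
  have hinv : (orthoReflection B '' Δ)⁻¹ ⊆ orthoReflection B '' Δ := by
    rintro g ⟨a, ha, hg⟩
    exact ⟨a, ha, by rw [← inv_inv g, ← hg, orthoReflection_inv]⟩
  obtain ⟨L, hL, rfl⟩ :=
    Subgroup.exists_list_prod_eq_of_inv_subset hinv (hΔ.reflectionGroup_le hR hreg hw)
  exact hΔ.eq_of_list_prod_apply_eq hR hreg hp hq L hL hpq

section RootForm

variable {V : Type*} [AddCommGroup V] [Module ℝ V]

noncomputable def rootForm (s : Finset (Module.Dual ℝ V)) : LinearMap.BilinForm ℝ V :=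
  ∑ α ∈ s, (LinearMap.mul ℝ ℝ).compl₁₂ α α

lemma rootForm_apply (s : Finset (Module.Dual ℝ V)) (v w : V) :
    rootForm s v w = ∑ α ∈ s, α v * α w := by
  simp [rootForm, LinearMap.sum_apply]

lemma rootForm_isSymm (s : Finset (Module.Dual ℝ V)) : (rootForm s).IsSymm :=
  ⟨fun v w => by simp only [rootForm_apply, mul_comm]⟩

lemma rootForm_self_pos {s : Finset (Module.Dual ℝ V)} {α : Module.Dual ℝ V} (hα : α ∈ s)
    {v : V} (hv : α v ≠ 0) : 0 < rootForm s v v := by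
  rw [rootForm_apply]
  exact Finset.sum_pos' (fun β _ => mul_self_nonneg _) ⟨α, hα, mul_self_pos.2 hv⟩

lemma rootForm_apply_apply_of_involutive {s : Finset (Module.Dual ℝ V)} {g : V →ₗ[ℝ] V}
    (hg : Function.Involutive g) (hs : ∀ α ∈ s, α ∘ₗ g ∈ s) (v w : V) :
    rootForm s (g v) (g w) = rootForm s v w := by
  have hinv : ∀ α ∈ s, (α ∘ₗ g) ∘ₗ g = α := fun α _ => LinearMap.ext fun v => by simp [hg v]
  simp only [rootForm_apply]
  exact Finset.sum_nbij' (· ∘ₗ g) (· ∘ₗ g) hs hs hinv hinv fun α _ => rfl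

lemma apply_mul_eq_of_preReflection_invariant {B : LinearMap.BilinForm ℝ V} {x : V}
    {f : Module.Dual ℝ V} (hf : f x = 2)
    (hB : ∀ v w, B (Module.preReflection x f v) (Module.preReflection x f w) = B v w) (v : V) :
    f v * B x x = 2 * B x v := by
  have := hB x v
  rw [Module.preReflection_apply_self hf, Module.preReflection_apply] at this
  simp only [map_neg, map_sub, map_smul, LinearMap.neg_apply, smul_eq_mul] at this
  linarith

end RootForm

section Coroots

variable {V : Type*} [AddCommGroup V] [Module ℝ V] {Φ : Set (Module.Dual ℝ V)}
  {coroot : Module.Dual ℝ V → V}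

lemma rootForm_coroot_pos (hfin : Φ.Finite) (hpair : ∀ α ∈ Φ, α (coroot α) = 2)
    {α : Module.Dual ℝ V} (hα : α ∈ Φ) : 0 < rootForm hfin.toFinset (coroot α) (coroot α) :=
  rootForm_self_pos (hfin.mem_toFinset.2 hα) (by rw [hpair α hα]; norm_num)

lemma root_apply_eq (hfin : Φ.Finite) (hpair : ∀ α ∈ Φ, α (coroot α) = 2)
    (hrefl : ∀ α ∈ Φ, ∀ β ∈ Φ, β - β (coroot α) • α ∈ Φ) {α : Module.Dual ℝ V} (hα : α ∈ Φ)
    (v : V) :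
    α v = 2 * rootForm hfin.toFinset (coroot α) v /
      rootForm hfin.toFinset (coroot α) (coroot α) := by
  refine eq_div_of_mul_eq (rootForm_coroot_pos hfin hpair hα).ne' ?_
  refine apply_mul_eq_of_preReflection_invariant (hpair α hα)
    (rootForm_apply_apply_of_involutive (Module.involutive_preReflection (hpair α hα))
      fun β hβ => ?_) v
  convert hfin.mem_toFinset.2 (hrefl α hα β (hfin.mem_toFinset.1 hβ)) using 1
  ext v
  simp [Module.preReflection_apply, mul_comm]

lemma orthoReflection_coroot_apply (hfin : Φ.Finite) (hpair : ∀ α ∈ Φ, α (coroot α) = 2)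
    (hrefl : ∀ α ∈ Φ, ∀ β ∈ Φ, β - β (coroot α) • α ∈ Φ) {α : Module.Dual ℝ V} (hα : α ∈ Φ)
    (v : V) : orthoReflection (rootForm hfin.toFinset) (coroot α) v = v - α v • coroot α := by
  rw [orthoReflection_apply, root_apply_eq hfin hpair hrefl hα v, div_mul_eq_mul_div]

/-- The root `δ` is read off from its coroot `s_γ β^∨`. -/
lemma eq_sub_smul_of_coroot_eq (hfin : Φ.Finite) (hpair : ∀ α ∈ Φ, α (coroot α) = 2)
    (hrefl : ∀ α ∈ Φ, ∀ β ∈ Φ, β - β (coroot α) • α ∈ Φ) {β γ δ : Module.Dual ℝ V}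
    (hβ : β ∈ Φ) (hγ : γ ∈ Φ) (hδ : δ ∈ Φ)
    (hδβ : coroot δ = orthoReflection (rootForm hfin.toFinset) (coroot γ) (coroot β)) :
    δ = β - β (coroot γ) • γ := by
  set B := rootForm hfin.toFinset
  set s := orthoReflection B (coroot γ)
  ext v
  have hv : B (s (coroot β)) v = B (coroot β) (s v) := by
    conv_lhs => rw [← orthoReflection_orthoReflection (B := B) (coroot γ) v]
    exact orthoReflection_isometry (rootForm_isSymm _) _ _ _
  rw [root_apply_eq hfin hpair hrefl hδ, hδβ, hv, orthoReflection_isometry (rootForm_isSymm _),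
    ← root_apply_eq hfin hpair hrefl hβ, orthoReflection_coroot_apply hfin hpair hrefl hγ]
  simp [mul_comm]

lemma eq_smul_of_coroot_eq_smul (hfin : Φ.Finite) (hpair : ∀ α ∈ Φ, α (coroot α) = 2)
    (hrefl : ∀ α ∈ Φ, ∀ β ∈ Φ, β - β (coroot α) • α ∈ Φ) {β γ : Module.Dual ℝ V}
    (hβ : β ∈ Φ) (hγ : γ ∈ Φ) {t : ℝ} (hβγ : coroot β = t • coroot γ) : γ = t • β := by
  have ht : t ≠ 0 := by
    rintro rfl
    simpa [hβγ] using hpair β hβ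
  ext v
  rw [LinearMap.smul_apply, root_apply_eq hfin hpair hrefl hγ, root_apply_eq hfin hpair hrefl hβ,
    hβγ]
  have := (rootForm_coroot_pos hfin hpair hγ).ne'
  simp only [map_smul, LinearMap.smul_apply, smul_eq_mul]
  field_simp

lemma isRootVectorSystem_coroots (hfin : Φ.Finite) (hpair : ∀ α ∈ Φ, α (coroot α) = 2)
    (hreflco : ∀ α ∈ Φ, ∀ β ∈ Φ, coroot β - α (coroot β) • coroot α ∈ coroot '' Φ)
    (hrefl : ∀ α ∈ Φ, ∀ β ∈ Φ, β - β (coroot α) • α ∈ Φ)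
    (hred : ∀ α ∈ Φ, ∀ c : ℝ, c • α ∈ Φ → c = 1 ∨ c = -1)
    {S : Set (Module.Dual ℝ V)} (hS : S ⊆ Φ)
    (hSrefl : ∀ α ∈ S, ∀ β ∈ S, β - β (coroot α) • α ∈ S)
    {R : Finset V} (hRS : (R : Set V) = coroot '' S) :
    IsRootVectorSystem (rootForm hfin.toFinset) R := by
  have hmem : ∀ {a}, a ∈ R → ∃ α ∈ S, coroot α = a := fun ha => by
    rwa [← Finset.mem_coe, hRS] at ha
  refine ⟨rootForm_isSymm _, ?_, ?_, ?_⟩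
  · intro a ha
    obtain ⟨α, hα, rfl⟩ := hmem ha
    exact rootForm_coroot_pos hfin hpair (hS hα)
  · intro a ha b hb
    obtain ⟨γ, hγ, rfl⟩ := hmem ha
    obtain ⟨β, hβ, rfl⟩ := hmem hb
    obtain ⟨δ, hδ, hδβ⟩ := hreflco γ (hS hγ) β (hS hβ)
    rw [← orthoReflection_coroot_apply hfin hpair hrefl (hS hγ)] at hδβ
    rw [← Finset.mem_coe, hRS, ← hδβ]
    refine ⟨δ, ?_, rfl⟩
    rw [eq_sub_smul_of_coroot_eq hfin hpair hrefl (hS hβ) (hS hγ) hδ hδβ]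
    exact hSrefl γ hγ β hβ
  · intro a ha b hb t hbt
    obtain ⟨γ, hγ, rfl⟩ := hmem ha
    obtain ⟨β, hβ, rfl⟩ := hmem hb
    refine hred β (hS hβ) t ?_
    rw [← eq_smul_of_coroot_eq_smul hfin hpair hrefl (hS hβ) (hS hγ) hbt]
    exact hS hγ

lemma rootForm_apply_coroot_ne_zero (hfin : Φ.Finite) (hpair : ∀ α ∈ Φ, α (coroot α) = 2)
    (hrefl : ∀ α ∈ Φ, ∀ β ∈ Φ, β - β (coroot α) • α ∈ Φ) {S : Set (Module.Dual ℝ V)}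
    (hS : S ⊆ Φ) {R : Finset V} (hRS : (R : Set V) = coroot '' S) {v₀ : V}
    (hv₀ : ∀ α ∈ Φ, α v₀ ≠ 0) : ∀ a ∈ R, rootForm hfin.toFinset v₀ a ≠ 0 := by
  intro a ha hzero
  obtain ⟨α, hα, rfl⟩ : a ∈ coroot '' S := hRS ▸ ha
  rw [(rootForm_isSymm _).eq] at hzero
  exact hv₀ α (hS hα) (by rw [root_apply_eq hfin hpair hrefl (hS hα), hzero]; simp)

lemma isDominant_of_forall_nonneg (hfin : Φ.Finite) (hpair : ∀ α ∈ Φ, α (coroot α) = 2)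
    (hrefl : ∀ α ∈ Φ, ∀ β ∈ Φ, β - β (coroot α) • α ∈ Φ) {S : Set (Module.Dual ℝ V)}
    (hS : S ⊆ Φ) {R : Finset V} (hRS : (R : Set V) = coroot '' S) {v₀ p : V}
    (hp : ∀ α ∈ S, 0 < α v₀ → 0 ≤ α p) :
    IsDominant (rootForm hfin.toFinset) R (rootForm hfin.toFinset v₀) p := by
  intro a ha
  obtain ⟨haR, hpos⟩ := mem_posRoots.1 ha
  obtain ⟨α, hα, rfl⟩ : a ∈ coroot '' S := hRS ▸ haR
  have hc := rootForm_coroot_pos hfin hpair (hS hα)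
  have hαp := hp α hα (by
    rw [root_apply_eq hfin hpair hrefl (hS hα), ← (rootForm_isSymm _).eq]
    positivity)
  rw [root_apply_eq hfin hpair hrefl (hS hα), le_div_iff₀ hc] at hαp
  linarith

end Coroots

section AffineAction

variable {V : Type*} [AddCommGroup V] [Module ℝ V]

def affineConj (z : V) : (V ≃ₗ[ℝ] V) →* Equiv.Perm V :=
  (MulAut.conj (Equiv.addLeft z)).toMonoidHom.comp (MulAction.toPermHom (V ≃ₗ[ℝ] V) V)

lemma affineConj_apply (z : V) (A : V ≃ₗ[ℝ] V) (v : V) : affineConj z A v = z + A (v - z) := by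
  simp [affineConj, sub_eq_neg_add]

lemma sub_eq_inv_apply_of_addRight_eq {x y ℓ ℓ' : V} {A C : V ≃ₗ[ℝ] V}
    (h : Equiv.addRight ℓ' = affineConj y A * Equiv.addRight ℓ * affineConj x C) :
    ℓ' - (y - x) = C⁻¹ (ℓ - (y - x)) := by
  have hv : ∀ v, v + ℓ' = y + A (x + C (v - x) + ℓ - y) := fun v => by
    simpa [affineConj_apply] using congrArg (· v) h
  have hx := hv x
  rw [sub_self, map_zero, add_zero] at hx
  have hAC : ∀ u, A (C u) = u := fun u => by
    have hxu := hv (x + u)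
    rw [add_sub_cancel_left, show x + C u + ℓ - y = C u + (x + ℓ - y) by abel, map_add] at hxu
    calc A (C u) = (y + (A (C u) + A (x + ℓ - y))) - (y + A (x + ℓ - y)) := by abel
      _ = (x + u + ℓ') - (x + ℓ') := by rw [← hx, ← hxu]
      _ = u := by abel
  calc ℓ' - (y - x) = A (x + ℓ - y) := by rw [← add_sub_cancel_left y (A _), ← hx]; abel
    _ = A (C (C⁻¹ (ℓ - (y - x)))) := by
      rw [LinearEquiv.coe_inv, LinearEquiv.apply_symm_apply]; congr 1; abel
    _ = C⁻¹ (ℓ - (y - x)) := hAC _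

lemma exists_affineConj_eq {Φ : Set (Module.Dual ℝ V)} (hfin : Φ.Finite)
    {coroot : Module.Dual ℝ V → V} (hpair : ∀ α ∈ Φ, α (coroot α) = 2)
    (hrefl : ∀ α ∈ Φ, ∀ β ∈ Φ, β - β (coroot α) • α ∈ Φ)
    {r : Module.Dual ℝ V → V → Equiv.Perm V}
    (hr : ∀ α ∈ Φ, ∀ z v : V, r α z v = v - (α v - α z) • coroot α)
    {P : Module.Dual ℝ V → Prop} {z : V} {w : Equiv.Perm V}
    (hw : w ∈ Subgroup.closure {g | ∃ α ∈ Φ, P α ∧ g = r α z}) :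
    ∃ A ∈ reflectionGroup (rootForm hfin.toFinset) (coroot '' {α ∈ Φ | P α}),
      affineConj z A = w := by
  refine Subgroup.mem_map.1 (Subgroup.closure_le _ |>.2 ?_ hw)
  rintro _ ⟨α, hα, hP, rfl⟩
  refine ⟨_, Subgroup.subset_closure ⟨_, ⟨α, ⟨hα, hP⟩, rfl⟩, rfl⟩, Equiv.ext fun v => ?_⟩
  rw [affineConj_apply, orthoReflection_coroot_apply hfin hpair hrefl hα, hr α hα, map_sub]
  abel

end AffineAction

theorem stmt_1_general (V : Type*) [AddCommGroup V] [Module ℝ V]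
    (Φ : Set (Module.Dual ℝ V)) (hfin : Φ.Finite)
    (coroot : Module.Dual ℝ V → V)
    (hpair : ∀ α ∈ Φ, α (coroot α) = 2)
    (hreflco : ∀ α ∈ Φ, ∀ β ∈ Φ, coroot β - α (coroot β) • coroot α ∈ coroot '' Φ)
    (hrefl : ∀ α ∈ Φ, ∀ β ∈ Φ, β - β (coroot α) • α ∈ Φ)
    (hcrys : ∀ α ∈ Φ, ∀ β ∈ Φ, ∃ n : ℤ, β (coroot α) = (n : ℝ))
    (hred : ∀ α ∈ Φ, ∀ c : ℝ, c • α ∈ Φ → c = 1 ∨ c = -1)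
    -- the affine reflections `r α z : v ↦ v − (α(v) − α(z)) α^∨` for `α ∈ Φ`
    (r : Module.Dual ℝ V → V → Equiv.Perm V)
    (hr : ∀ α ∈ Φ, ∀ z v : V, r α z v = v - (α v - α z) • coroot α)
    -- a positive system `Pos = Φ^+ ⊆ Φ`
    (Pos : Set (Module.Dual ℝ V))
    (hPos : ∃ v0 : V, (∀ α ∈ Φ, α v0 ≠ 0) ∧ Pos = {α ∈ Φ | 0 < α v0})
    (x y : V) :
    ∀ ℓ ℓ' : V,
      (ℓ ∈ AddSubgroup.closure (coroot '' Φ) ∧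
        ∀ α ∈ Pos, (∃ n : ℤ, α x = (n : ℝ)) → α (y - x) ≤ α ℓ) →
      (ℓ' ∈ AddSubgroup.closure (coroot '' Φ) ∧
        ∀ α ∈ Pos, (∃ n : ℤ, α x = (n : ℝ)) → α (y - x) ≤ α ℓ') →
      (∃ wy ∈ Subgroup.closure
          {g : Equiv.Perm V | ∃ α ∈ Φ, (∃ n : ℤ, α y = (n : ℝ)) ∧ g = r α y},
        ∃ wx ∈ Subgroup.closure
          {g : Equiv.Perm V | ∃ α ∈ Φ, (∃ n : ℤ, α x = (n : ℝ)) ∧ g = r α x},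
          Equiv.addRight ℓ' = wy * Equiv.addRight ℓ * wx) →
      ℓ = ℓ' := by
  rintro ℓ ℓ' ⟨-, hℓ⟩ ⟨-, hℓ'⟩ ⟨wy, hwy, wx, hwx, heq⟩
  obtain ⟨v₀, hv₀, rfl⟩ := hPos
  set S := {α ∈ Φ | ∃ n : ℤ, α x = n}
  have hS : S ⊆ Φ := Set.sep_subset _ _
  have hSrefl : ∀ α ∈ S, ∀ β ∈ S, β - β (coroot α) • α ∈ S := by
    rintro α ⟨hα, m, hm⟩ β ⟨hβ, n, hn⟩
    obtain ⟨k, hk⟩ := hcrys α hα β hβ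
    exact ⟨hrefl α hα β hβ, n - k * m, by simp [hm, hn, hk]⟩
  set R := ((hfin.subset hS).image coroot).toFinset
  have hRS : (R : Set V) = coroot '' S := Set.Finite.coe_toFinset _
  obtain ⟨A, -, rfl⟩ := exists_affineConj_eq hfin hpair hrefl hr hwy
  obtain ⟨C, hC, rfl⟩ := exists_affineConj_eq hfin hpair hrefl hr hwx
  have hdom : ∀ m : V, (∀ α ∈ {α ∈ Φ | 0 < α v₀}, (∃ n : ℤ, α x = n) → α (y - x) ≤ α m) →
      IsDominant (rootForm hfin.toFinset) R (rootForm hfin.toFinset v₀) (m - (y - x)) :=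
    fun m hm => isDominant_of_forall_nonneg hfin hpair hrefl hS hRS fun α hα hpos => by
      simpa [map_sub] using hm α ⟨hS hα, hpos⟩ hα.2
  have hR := isRootVectorSystem_coroots hfin hpair hreflco hrefl hred hS hSrefl hRS
  have := hR.eq_of_isDominant (rootForm_apply_coroot_ne_zero hfin hpair hrefl hS hRS hv₀)
    (inv_mem (hRS ▸ hC))
    (hdom ℓ hℓ) (hdom ℓ' hℓ')
    (sub_eq_inv_apply_of_addRight_eq heq).symm
  simpa using this

/-- Let `Φ ⊂ V*` be a finite reduced crystallographic root system spanning `V*`, with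
coroot lattice `Q` and affine Weyl group acting on `V`.  Fix a positive system `Pos ⊆ Φ`,
let `x ∈ V` and let `y ∈ V` be special.  If `ℓ, ℓ' ∈ X_{x,y}^+` are such that there exist
`w_y ∈ W_y` and `w_x ∈ W_x` with `t(ℓ') = w_y ∘ t(ℓ) ∘ w_x`, then `ℓ = ℓ'`; hence
distinct elements of `X_{x,y}^+` give translations lying in distinct
`(W_y, W_x)`-double cosets. -/
theorem stmt_1 (V : Type*) [AddCommGroup V] [Module ℝ V] [FiniteDimensional ℝ V]
    (Φ : Set (Module.Dual ℝ V)) (hfin : Φ.Finite) (h0 : (0 : Module.Dual ℝ V) ∉ Φ)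
    (hspan : Submodule.span ℝ Φ = ⊤)
    (coroot : Module.Dual ℝ V → V)
    (hpair : ∀ α ∈ Φ, α (coroot α) = 2)
    (hreflco : ∀ α ∈ Φ, ∀ β ∈ Φ, coroot β - α (coroot β) • coroot α ∈ coroot '' Φ)
    (hrefl : ∀ α ∈ Φ, ∀ β ∈ Φ, β - β (coroot α) • α ∈ Φ)
    (hcrys : ∀ α ∈ Φ, ∀ β ∈ Φ, ∃ n : ℤ, β (coroot α) = (n : ℝ))
    (hred : ∀ α ∈ Φ, ∀ c : ℝ, c • α ∈ Φ → c = 1 ∨ c = -1)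
    -- the linear reflections `s α : v ↦ v − α(v) α^∨` for `α ∈ Φ`
    (s : Module.Dual ℝ V → Equiv.Perm V)
    (hs : ∀ α ∈ Φ, ∀ v : V, s α v = v - α v • coroot α)
    -- the affine reflections `r α z : v ↦ v − (α(v) − α(z)) α^∨` for `α ∈ Φ`
    (r : Module.Dual ℝ V → V → Equiv.Perm V)
    (hr : ∀ α ∈ Φ, ∀ z v : V, r α z v = v - (α v - α z) • coroot α)
    -- a positive system `Pos = Φ^+ ⊆ Φ`
    (Pos : Set (Module.Dual ℝ V))
    (hPos : ∃ v0 : V, (∀ α ∈ Φ, α v0 ≠ 0) ∧ Pos = {α ∈ Φ | 0 < α v0})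
    (x y : V)
    -- `y` is special
    (hy : ∀ α ∈ Φ, ∃ n : ℤ, α y = (n : ℝ)) :
    ∀ ℓ ℓ' : V,
      (ℓ ∈ AddSubgroup.closure (coroot '' Φ) ∧
        ∀ α ∈ Pos, (∃ n : ℤ, α x = (n : ℝ)) → α (y - x) ≤ α ℓ) →
      (ℓ' ∈ AddSubgroup.closure (coroot '' Φ) ∧
        ∀ α ∈ Pos, (∃ n : ℤ, α x = (n : ℝ)) → α (y - x) ≤ α ℓ') →
      (∃ wy ∈ Subgroup.closure
          {g : Equiv.Perm V | ∃ α ∈ Φ, (∃ n : ℤ, α y = (n : ℝ)) ∧ g = r α y},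
        ∃ wx ∈ Subgroup.closure
          {g : Equiv.Perm V | ∃ α ∈ Φ, (∃ n : ℤ, α x = (n : ℝ)) ∧ g = r α x},
          Equiv.addRight ℓ' = wy * Equiv.addRight ℓ * wx) →
      ℓ = ℓ' :=
  stmt_1_general V Φ hfin coroot hpair hreflco hrefl hcrys hred r hr Pos hPos x y
end

section
/- Let x ∈ V, let y ∈ V be special, and set Υ_x = {w ∈ W₀ : wD ⊆ D_x}. Then int(X_{x,y}^+) is the union over w ∈ Υ_x of the sets X_{x,y}^+ ∩ (y − x + wD), and these sets are pairwise disjoint for distinct w, w' ∈ Υ_x. -/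
/-!
Put `v = ℓ - (y - x)`. If `ℓ ∈ int(X⁺_{x,y})`, no root vanishes on `v`: for a root with
`α x ∈ ℤ` this is the strict inequality, and otherwise `α v ≡ α x (mod ℤ)` because `α ℓ` and
`α y` are integers. So `v = w d` with `w ∈ W₀` and `d ∈ D`. A positive root with `α x ∈ ℤ` is
positive at `v`, hence `α ∘ w` is a positive root and `α` is positive on all of `wD`, that is
`wD ⊆ D_x`. Disjointness is the simple transitivity of `W₀` on chambers: if `w d = w' d'`
with `d, d' ∈ D`, then `w⁻¹ w'` permutes `Φ⁺`, and the exchange condition for simple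
reflections forces `w⁻¹ w' = 1`.
-/

open Module Set

structure ReducedRootSystem (V : Type*) [AddCommGroup V] [Module ℝ V] where
  Φ : Set (Dual ℝ V)
  finite : Φ.Finite
  span_eq_top : Submodule.span ℝ Φ = ⊤
  coroot : Dual ℝ V → V
  apply_coroot : ∀ α ∈ Φ, α (coroot α) = 2
  reflect_mem : ∀ α ∈ Φ, ∀ β ∈ Φ, β - β (coroot α) • α ∈ Φ
  crystallographic : ∀ α ∈ Φ, ∀ β ∈ Φ, ∃ n : ℤ, β (coroot α) = n
  reduced : ∀ α ∈ Φ, ∀ c : ℝ, c • α ∈ Φ → c = 1 ∨ c = -1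

namespace ReducedRootSystem

variable {V : Type*} [AddCommGroup V] [Module ℝ V] (R : ReducedRootSystem V) {α β : Dual ℝ V}

lemma eq_zero_of_forall_root_apply_eq_zero {v : V} (h : ∀ α ∈ R.Φ, α v = 0) : v = 0 := by
  have hker : Submodule.span ℝ R.Φ ≤ LinearMap.ker (Dual.eval ℝ V v) := Submodule.span_le.2 h
  rw [R.span_eq_top, top_le_iff, LinearMap.ker_eq_top] at hker
  exact eval_apply_injective ℝ (hker.trans (map_zero _).symm)

lemma eq_coroot (hα : α ∈ R.Φ) {c : V} (hc : α c = 2) (hmaps : ∀ β ∈ R.Φ, β - β c • α ∈ R.Φ) :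
    c = R.coroot α :=
  eval_apply_injective ℝ <| Dual.eq_of_preReflection_mapsTo R.finite R.span_eq_top hc
    (fun β hβ => by simpa [preReflection_apply] using hmaps β hβ) (R.apply_coroot α hα)
    (fun β hβ => by simpa [preReflection_apply] using R.reflect_mem α hα β hβ)

/-- Junk value `1` when `α (α^∨) ≠ 2`, which never happens for a root. -/
noncomputable def refl (α : Dual ℝ V) : V ≃ₗ[ℝ] V :=
  if h : α (R.coroot α) = 2 then Module.reflection h else 1

def weylGroup : Subgroup (V ≃ₗ[ℝ] V) := Subgroup.closure (R.refl '' R.Φ)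

lemma refl_apply (hα : α ∈ R.Φ) (v : V) : R.refl α v = v - α v • R.coroot α := by
  rw [refl, dif_pos (R.apply_coroot α hα), reflection_apply]

lemma refl_inv (hα : α ∈ R.Φ) : (R.refl α)⁻¹ = R.refl α := by
  rw [refl, dif_pos (R.apply_coroot α hα), reflection_inv]

lemma refl_mul_self (hα : α ∈ R.Φ) : R.refl α * R.refl α = 1 := by
  rw [← mul_inv_cancel (R.refl α), R.refl_inv hα]

lemma refl_mem_weylGroup (hα : α ∈ R.Φ) : R.refl α ∈ R.weylGroup :=
  Subgroup.subset_closure (mem_image_of_mem _ hα)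

lemma comp_refl (hα : α ∈ R.Φ) (β : Dual ℝ V) :
    β ∘ₗ (R.refl α : V →ₗ[ℝ] V) = β - β (R.coroot α) • α := by
  ext v
  simp [R.refl_apply hα, mul_comm]

lemma comp_refl_self (hα : α ∈ R.Φ) : α ∘ₗ (R.refl α : V →ₗ[ℝ] V) = -α := by
  rw [R.comp_refl hα, R.apply_coroot α hα, two_smul, sub_add_cancel_left]

lemma comp_mul (β : Dual ℝ V) (g h : V ≃ₗ[ℝ] V) :
    β ∘ₗ ((g * h : V ≃ₗ[ℝ] V) : V →ₗ[ℝ] V) = (β ∘ₗ (g : V →ₗ[ℝ] V)) ∘ₗ (h : V →ₗ[ℝ] V) :=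
  rfl

lemma neg_mem (hα : α ∈ R.Φ) : -α ∈ R.Φ := by
  simpa [R.apply_coroot α hα, two_smul] using R.reflect_mem α hα α hα

lemma comp_mem {g : V ≃ₗ[ℝ] V} (hg : g ∈ R.weylGroup) (hβ : β ∈ R.Φ) :
    β ∘ₗ (g : V →ₗ[ℝ] V) ∈ R.Φ := by
  induction hg using Subgroup.closure_induction'' generalizing β with
  | mem _ h =>
    obtain ⟨α, hα, rfl⟩ := h
    rw [R.comp_refl hα]
    exact R.reflect_mem α hα β hβ
  | inv_mem _ h =>
    obtain ⟨α, hα, rfl⟩ := h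
    rw [R.refl_inv hα, R.comp_refl hα]
    exact R.reflect_mem α hα β hβ
  | one => exact hβ
  | mul g h _ _ hg hh => exact hh (hg hβ)

lemma coroot_comp {g : V ≃ₗ[ℝ] V} (hg : g ∈ R.weylGroup) (hβ : β ∈ R.Φ) :
    R.coroot (β ∘ₗ (g : V →ₗ[ℝ] V)) = g⁻¹ (R.coroot β) := by
  refine (R.eq_coroot (R.comp_mem hg hβ) ?_ fun η hη => ?_).symm
  · simpa using R.apply_coroot β hβ
  · convert R.comp_mem hg (R.reflect_mem β hβ _ (R.comp_mem (inv_mem hg) hη)) using 1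
    ext v
    simp

lemma refl_comp {g : V ≃ₗ[ℝ] V} (hg : g ∈ R.weylGroup) (hβ : β ∈ R.Φ) :
    R.refl (β ∘ₗ (g : V →ₗ[ℝ] V)) = g⁻¹ * R.refl β * g := by
  ext v
  simp [R.refl_apply (R.comp_mem hg hβ), R.refl_apply hβ, R.coroot_comp hg hβ]

lemma refl_sub_smul (hα : α ∈ R.Φ) (hβ : β ∈ R.Φ) :
    R.refl (β - β (R.coroot α) • α) = R.refl α * R.refl β * R.refl α := by
  rw [← R.comp_refl hα, R.refl_comp (R.refl_mem_weylGroup hα) hβ, R.refl_inv hα]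

lemma refl_neg (hα : α ∈ R.Φ) : R.refl (-α) = R.refl α := by
  rw [← R.comp_refl_self hα, R.refl_comp (R.refl_mem_weylGroup hα) hα, mul_assoc,
    inv_mul_cancel_left]

noncomputable def form : LinearMap.BilinForm ℝ V :=
  ∑ α ∈ R.finite.toFinset, α.smulRight α

lemma form_apply (u v : V) : R.form u v = ∑ α ∈ R.finite.toFinset, α u * α v := by
  simp [form]

lemma form_comm (u v : V) : R.form u v = R.form v u := by
  simp only [form_apply, mul_comm]

lemma form_self_pos {v : V} (hv : v ≠ 0) : 0 < R.form v v := by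
  obtain ⟨α, hα, hαv⟩ : ∃ α ∈ R.Φ, α v ≠ 0 := by
    by_contra! h
    exact hv (R.eq_zero_of_forall_root_apply_eq_zero h)
  rw [form_apply]
  exact Finset.sum_pos' (fun β _ => mul_self_nonneg _)
    ⟨α, R.finite.mem_toFinset.2 hα, mul_self_pos.2 hαv⟩

lemma form_map {g : V ≃ₗ[ℝ] V} (hg : g ∈ R.weylGroup) (u v : V) :
    R.form (g u) (g v) = R.form u v := by
  simp only [form_apply]
  refine Finset.sum_nbij' (fun β => β ∘ₗ (g : V →ₗ[ℝ] V))
    (fun β => β ∘ₗ ((g⁻¹ : V ≃ₗ[ℝ] V) : V →ₗ[ℝ] V)) ?_ ?_ ?_ ?_ ?_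
  · simpa using fun β hβ => R.comp_mem hg hβ
  · simpa using fun β hβ => R.comp_mem (inv_mem hg) hβ
  all_goals intro β _
  · ext v; simp
  · ext v; simp
  · simp

lemma apply_mul_form_coroot (hα : α ∈ R.Φ) (v : V) :
    α v * R.form (R.coroot α) (R.coroot α) = 2 * R.form v (R.coroot α) := by
  have h := R.form_map (R.refl_mem_weylGroup hα) v (R.coroot α)
  simp only [R.refl_apply hα, R.apply_coroot α hα, map_sub, map_smul, LinearMap.sub_apply,
    LinearMap.smul_apply, smul_eq_mul] at h
  linarith

lemma coroot_ne_zero (hα : α ∈ R.Φ) : R.coroot α ≠ 0 := fun h => by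
  simpa [h] using R.apply_coroot α hα

lemma form_coroot_self_pos (hα : α ∈ R.Φ) : 0 < R.form (R.coroot α) (R.coroot α) :=
  R.form_self_pos (R.coroot_ne_zero hα)

lemma apply_coroot_pos_comm (hα : α ∈ R.Φ) (hβ : β ∈ R.Φ) (h : 0 < β (R.coroot α)) :
    0 < α (R.coroot β) := by
  have h₁ := R.apply_mul_form_coroot hβ (R.coroot α)
  have h₂ := R.apply_mul_form_coroot hα (R.coroot β)
  rw [R.form_comm (R.coroot β)] at h₂
  have := R.form_coroot_self_pos hα
  have : 0 < R.form (R.coroot α) (R.coroot β) := by nlinarith [R.form_coroot_self_pos hβ]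
  nlinarith

lemma coroot_injOn : InjOn R.coroot R.Φ := by
  intro α hα β hβ hab
  ext v
  have hα' := R.apply_mul_form_coroot hα v
  have hβ' := R.apply_mul_form_coroot hβ v
  rw [hab] at hα'
  exact mul_right_cancel₀ (R.form_coroot_self_pos hβ).ne' (hα'.trans hβ'.symm)

lemma sub_mem_of_apply_coroot_pos (hα : α ∈ R.Φ) (hβ : β ∈ R.Φ) (hne : β ≠ α)
    (h : 0 < β (R.coroot α)) : β - α ∈ R.Φ := by
  obtain ⟨p, hp⟩ := R.crystallographic α hα β hβ
  obtain ⟨q, hq⟩ := R.crystallographic β hβ α hα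
  have hp0 : 0 < p := by exact_mod_cast hp ▸ h
  have hq0 : 0 < q := by exact_mod_cast hq ▸ R.apply_coroot_pos_comm hα hβ h
  rcases (by omega : p = 1 ∨ q = 1 ∨ (2 ≤ p ∧ 2 ≤ q)) with rfl | rfl | ⟨hp2, hq2⟩
  · simpa [hp] using R.reflect_mem α hα β hβ
  · simpa [hq] using R.neg_mem (R.reflect_mem β hβ α hα)
  · -- `p, q ≥ 2` forces `|α^∨ - β^∨|² ≤ 0`
    refine absurd (R.coroot_injOn hβ hα ?_) hne
    by_contra hab
    have h₁ := R.apply_mul_form_coroot hβ (R.coroot α)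
    have h₂ := R.apply_mul_form_coroot hα (R.coroot β)
    have hp2' : (2 : ℝ) ≤ p := by exact_mod_cast hp2
    have hq2' : (2 : ℝ) ≤ q := by exact_mod_cast hq2
    have hpos := R.form_self_pos (sub_ne_zero.2 hab)
    rw [hp] at h₁
    rw [hq, R.form_comm (R.coroot β)] at h₂
    simp only [map_sub, LinearMap.sub_apply, R.form_comm (R.coroot β) (R.coroot α)] at hpos
    nlinarith [mul_le_mul_of_nonneg_right hp2' (R.form_coroot_self_pos hβ).le,
      mul_le_mul_of_nonneg_right hq2' (R.form_coroot_self_pos hα).le]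

lemma finite_weylGroup : (R.weylGroup : Set (V ≃ₗ[ℝ] V)).Finite := by
  have : Finite R.Φ := R.finite.to_subtype
  let f : R.weylGroup → (R.Φ → R.Φ) := fun g β => ⟨β.1 ∘ₗ (g.1 : V →ₗ[ℝ] V), R.comp_mem g.2 β.2⟩
  have : Finite R.weylGroup := Finite.of_injective f fun g h hgh => by
    refine Subtype.ext <| LinearEquiv.ext fun v => sub_eq_zero.1 <|
      R.eq_zero_of_forall_root_apply_eq_zero fun α hα => ?_
    simpa [sub_eq_zero, f] using congrArg (fun F => (F ⟨α, hα⟩).1 v) hgh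
  exact Set.toFinite _

lemma exists_int_apply_eq {ℓ : V} (hℓ : ℓ ∈ AddSubgroup.closure (R.coroot '' R.Φ))
    (hα : α ∈ R.Φ) : ∃ n : ℤ, α ℓ = n := by
  have hle : AddSubgroup.closure (R.coroot '' R.Φ) ≤
      (Int.castAddHom ℝ).range.comap (α : V →+ ℝ) := by
    rw [AddSubgroup.closure_le]
    rintro _ ⟨β, hβ, rfl⟩
    obtain ⟨n, hn⟩ := R.crystallographic β hβ α hα
    exact ⟨n, hn.symm⟩
  obtain ⟨n, hn⟩ := hle hℓ
  exact ⟨n, hn.symm⟩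

def IsRegular (v : V) : Prop := ∀ α ∈ R.Φ, α v ≠ 0

def pos (v₀ : V) : Set (Dual ℝ V) := {α ∈ R.Φ | 0 < α v₀}

def chamber (v₀ : V) : Set V := {v | ∀ α ∈ R.pos v₀, 0 < α v}

def simple (v₀ : V) : Set (Dual ℝ V) :=
  {α ∈ R.pos v₀ | ∀ β ∈ R.pos v₀, ∀ γ ∈ R.pos v₀, α ≠ β + γ}

variable {R} {v₀ : V}

lemma pos_subset : R.pos v₀ ⊆ R.Φ := sep_subset _ _

lemma mem_pos_or_neg_mem_pos (hv₀ : R.IsRegular v₀) (hα : α ∈ R.Φ) :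
    α ∈ R.pos v₀ ∨ -α ∈ R.pos v₀ := by
  rcases (hv₀ α hα).lt_or_gt with h | h
  · exact .inr ⟨R.neg_mem hα, by simpa using h⟩
  · exact .inl ⟨hα, h⟩

lemma not_neg_mem_pos (hα : α ∈ R.pos v₀) : -α ∉ R.pos v₀ := fun h => by
  linarith [hα.2, show 0 < -α v₀ from h.2]

lemma mem_pos_of_apply_pos (hv₀ : R.IsRegular v₀) (hα : α ∈ R.Φ) {d : V}
    (hd : d ∈ R.chamber v₀) (h : 0 < α d) : α ∈ R.pos v₀ :=
  (mem_pos_or_neg_mem_pos hv₀ hα).resolve_right fun hneg => by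
    linarith [show 0 < -α d from hd _ hneg]

lemma isRegular_of_forall_pos (hv₀ : R.IsRegular v₀) {v : V} (h : ∀ α ∈ R.pos v₀, α v ≠ 0) :
    R.IsRegular v := fun α hα => by
  rcases mem_pos_or_neg_mem_pos hv₀ hα with hα' | hα'
  · exact h α hα'
  · simpa using h _ hα'

lemma form_coroot_pos (hα : α ∈ R.pos v₀) : 0 < R.form v₀ (R.coroot α) := by
  have := R.apply_mul_form_coroot hα.1 v₀
  nlinarith [hα.2, R.form_coroot_self_pos hα.1]

/-- Pick the point `g v` of the finite orbit `W v` maximising `form · v₀`: a reflection `s_α`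
with `α > 0` changes this value by `-α (g v) · form α^∨ v₀`, so `α (g v) ≥ 0`. -/
lemma exists_apply_eq_of_isRegular {v : V} (hv : R.IsRegular v) (v₀ : V) :
    ∃ g ∈ R.weylGroup, ∃ d ∈ R.chamber v₀, g d = v := by
  obtain ⟨g, hg, hmax⟩ := Set.exists_max_image _ (fun g : V ≃ₗ[ℝ] V => R.form (g v) v₀)
    R.finite_weylGroup ⟨1, one_mem _⟩
  refine ⟨g⁻¹, inv_mem hg, g v, fun α hα => ?_, by simp⟩
  have hle := hmax _ (mul_mem (R.refl_mem_weylGroup hα.1) hg)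
  simp only [LinearEquiv.mul_apply, R.refl_apply hα.1, map_sub, map_smul,
    LinearMap.sub_apply, LinearMap.smul_apply, smul_eq_mul, R.form_comm (R.coroot α)] at hle
  have hne : α (g v) ≠ 0 := hv _ (R.comp_mem hg hα.1)
  have := form_coroot_pos hα
  exact lt_of_le_of_ne (nonneg_of_mul_nonneg_left (by linarith) this) hne.symm

lemma apply_pos_of_apply_pos (hv₀ : R.IsRegular v₀) {g : V ≃ₗ[ℝ] V} (hg : g ∈ R.weylGroup)
    (hα : α ∈ R.Φ) {d d' : V} (hd : d ∈ R.chamber v₀) (hd' : d' ∈ R.chamber v₀)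
    (h : 0 < α (g d)) : 0 < α (g d') :=
  hd' _ (mem_pos_of_apply_pos hv₀ (R.comp_mem hg hα) hd h)

lemma pos_induction {P : Dual ℝ V → Prop}
    (h : ∀ α ∈ R.pos v₀, (∀ β ∈ R.pos v₀, β v₀ < α v₀ → P β) → P α) (hα : α ∈ R.pos v₀) :
    P α := by
  let r : Dual ℝ V → Dual ℝ V → Prop := fun β α => β v₀ < α v₀
  have : IsStrictOrder (Dual ℝ V) r :=
    { irrefl := fun _ => lt_irrefl _, trans := fun _ _ _ => lt_trans }
  exact ((R.finite.subset pos_subset).wellFoundedOn (r := r)).induction hα h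

lemma mem_closure_simple (hα : α ∈ R.pos v₀) : α ∈ AddSubmonoid.closure (R.simple v₀) := by
  refine pos_induction (fun α hα ih => ?_) hα
  by_cases hs : α ∈ R.simple v₀
  · exact AddSubmonoid.subset_closure hs
  obtain ⟨β, hβ, γ, hγ, rfl⟩ : ∃ β ∈ R.pos v₀, ∃ γ ∈ R.pos v₀, α = β + γ := by
    simpa [simple, hα] using hs
  have := hβ.2
  have := hγ.2
  exact add_mem (ih β hβ (by simp; linarith)) (ih γ hγ (by simp; linarith))

lemma exists_simple_apply_coroot_pos (hα : α ∈ R.pos v₀) :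
    ∃ δ ∈ R.simple v₀, 0 < δ (R.coroot α) := by
  by_contra! h
  have hle : ∀ φ ∈ AddSubmonoid.closure (R.simple v₀), φ (R.coroot α) ≤ 0 := fun φ hφ => by
    induction hφ using AddSubmonoid.closure_induction with
    | mem δ hδ => exact h δ hδ
    | zero => simp
    | add _ _ _ _ h₁ h₂ => simpa using add_nonpos h₁ h₂
  linarith [hle α (mem_closure_simple hα), R.apply_coroot α (pos_subset hα)]

/-- Induction on an integer bound for `β (δ^∨)`: when it is positive, `β - δ` is again a positive
root other than `δ`, and `s_δ β = s_δ (β - δ) - δ`. -/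
lemma sub_smul_mem_pos (hv₀ : R.IsRegular v₀) {δ : Dual ℝ V} (hδ : δ ∈ R.simple v₀)
    (hβ : β ∈ R.pos v₀) (hne : β ≠ δ) : β - β (R.coroot δ) • δ ∈ R.pos v₀ := by
  have hδΦ := pos_subset hδ.1
  have hbase : ∀ β ∈ R.pos v₀, β (R.coroot δ) ≤ 0 → β - β (R.coroot δ) • δ ∈ R.pos v₀ :=
    fun β hβ h => ⟨R.reflect_mem δ hδΦ β (pos_subset hβ), by
      simpa using (by nlinarith [hβ.2, hδ.1.2] : β (R.coroot δ) * δ v₀ < β v₀)⟩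
  -- otherwise `δ = P + (δ - P)` with both summands positive
  have hsub : ∀ P ∈ R.pos v₀, P - δ ∈ R.Φ → P - δ ∈ R.pos v₀ := fun P hP hPδ =>
    (mem_pos_or_neg_mem_pos hv₀ hPδ).resolve_right fun hneg => hδ.2 P hP _ hneg (by abel)
  obtain ⟨n, hn⟩ := exists_nat_ge (β (R.coroot δ))
  induction n generalizing β with
  | zero => exact hbase β hβ (by simpa using hn)
  | succ n ih =>
    rcases le_or_gt (β (R.coroot δ)) 0 with h | h
    · exact hbase β hβ h
    have hβδ := hsub β hβ (R.sub_mem_of_apply_coroot_pos hδΦ (pos_subset hβ) hne h)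
    have hne' : β - δ ≠ δ := fun heq => by
      have : (2 : ℝ) • δ ∈ R.Φ := by
        rw [two_smul, ← sub_eq_iff_eq_add.1 heq]
        exact pos_subset hβ
      rcases R.reduced δ hδΦ 2 this with h2 | h2 <;> norm_num at h2
    have hIH := ih hβδ hne' (by simp [R.apply_coroot δ hδΦ]; push_cast at hn; linarith)
    have hγ := R.reflect_mem δ hδΦ β (pos_subset hβ)
    convert hsub _ hIH (by convert hγ using 1; simp [R.apply_coroot δ hδΦ]; module) using 1
    simp [R.apply_coroot δ hδΦ]
    module

lemma refl_mem_closure_simple (hv₀ : R.IsRegular v₀) (hα : α ∈ R.Φ) :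
    R.refl α ∈ Subgroup.closure (R.refl '' R.simple v₀) := by
  suffices h : ∀ α ∈ R.pos v₀, R.refl α ∈ Subgroup.closure (R.refl '' R.simple v₀) by
    rcases mem_pos_or_neg_mem_pos hv₀ hα with hα' | hα'
    · exact h α hα'
    · simpa [R.refl_neg hα] using h _ hα'
  intro α hα
  refine pos_induction (P := fun α => R.refl α ∈ Subgroup.closure (R.refl '' R.simple v₀))
    (fun α hα ih => ?_) hα
  obtain ⟨δ, hδ, hδα⟩ := exists_simple_apply_coroot_pos hα
  by_cases hαδ : α = δ
  · exact Subgroup.subset_closure ⟨δ, hδ, by rw [hαδ]⟩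
  have hδΦ := pos_subset hδ.1
  have hδmem : R.refl δ ∈ Subgroup.closure (R.refl '' R.simple v₀) :=
    Subgroup.subset_closure (mem_image_of_mem _ hδ)
  have hβ := ih _ (sub_smul_mem_pos hv₀ hδ hα hαδ)
    (by simp; nlinarith [hδ.1.2, R.apply_coroot_pos_comm (pos_subset hα) hδΦ hδα])
  have hconj : R.refl α = R.refl δ * R.refl (α - α (R.coroot δ) • δ) * R.refl δ := by
    rw [R.refl_sub_smul hδΦ (pos_subset hα)]
    simp only [← mul_assoc, R.refl_mul_self hδΦ, one_mul]
    simp only [mul_assoc, R.refl_mul_self hδΦ, mul_one]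
  rw [hconj]
  exact mul_mem (mul_mem hδmem hβ) hδmem

lemma exists_list_simple (hv₀ : R.IsRegular v₀) {g : V ≃ₗ[ℝ] V} (hg : g ∈ R.weylGroup) :
    ∃ L : List (Dual ℝ V), (∀ δ ∈ L, δ ∈ R.simple v₀) ∧ (L.map R.refl).prod = g := by
  have hg' : g ∈ Subgroup.closure (R.refl '' R.simple v₀) :=
    (Subgroup.closure_le _).2 (by rintro _ ⟨α, hα, rfl⟩; exact refl_mem_closure_simple hv₀ hα) hg
  clear hg
  induction hg' using Subgroup.closure_induction'' with
  | mem _ h =>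
    obtain ⟨δ, hδ, rfl⟩ := h
    exact ⟨[δ], by simpa using hδ, by simp⟩
  | inv_mem _ h =>
    obtain ⟨δ, hδ, rfl⟩ := h
    exact ⟨[δ], by simpa using hδ, by simp [R.refl_inv (pos_subset hδ.1)]⟩
  | one => exact ⟨[], by simp, by simp⟩
  | mul g h _ _ hg hh =>
    obtain ⟨L₁, hL₁, rfl⟩ := hg
    obtain ⟨L₂, hL₂, rfl⟩ := hh
    exact ⟨L₁ ++ L₂, by simpa using fun δ hδ => hδ.elim (hL₁ δ) (hL₂ δ), by simp⟩

lemma exists_refl_mul_eq_eraseIdx (hv₀ : R.IsRegular v₀) {L : List (Dual ℝ V)}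
    (hL : ∀ δ ∈ L, δ ∈ R.simple v₀) (hβ : β ∈ R.pos v₀)
    (hneg : -(β ∘ₗ ((L.map R.refl).prod : V →ₗ[ℝ] V)) ∈ R.pos v₀) :
    ∃ i, R.refl β * (L.map R.refl).prod = ((L.eraseIdx i).map R.refl).prod := by
  induction L generalizing β with
  | nil => exact absurd (by simpa using hneg) (not_neg_mem_pos hβ)
  | cons δ L ih =>
    have hδ := hL δ (by simp)
    have hδΦ := pos_subset hδ.1
    by_cases hβδ : β = δ
    · exact ⟨0, by simp [hβδ, ← mul_assoc, R.refl_mul_self hδΦ]⟩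
    rw [List.map_cons, List.prod_cons, comp_mul, R.comp_refl hδΦ] at hneg
    obtain ⟨i, hi⟩ :=
      ih (fun η hη => hL η (by simp [hη])) (sub_smul_mem_pos hv₀ hδ hβ hβδ) hneg
    refine ⟨i + 1, ?_⟩
    rw [List.eraseIdx_cons_succ, List.map_cons, List.prod_cons, List.map_cons, List.prod_cons,
      ← hi, R.refl_sub_smul hδΦ (pos_subset hβ)]
    simp only [← mul_assoc, R.refl_mul_self hδΦ, one_mul]

lemma prod_eq_one_of_forall_comp_mem_pos (hv₀ : R.IsRegular v₀) (L : List (Dual ℝ V))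
    (hL : ∀ δ ∈ L, δ ∈ R.simple v₀)
    (hpos : ∀ β ∈ R.pos v₀, β ∘ₗ ((L.map R.refl).prod : V →ₗ[ℝ] V) ∈ R.pos v₀) :
    (L.map R.refl).prod = 1 := by
  induction hn : L.length using Nat.strong_induction_on generalizing L with
  | _ n ih =>
  cases L with
  | nil => rfl
  | cons δ L =>
    have hδ := hL δ (by simp)
    have hneg := hpos δ hδ.1
    rw [List.map_cons, List.prod_cons, comp_mul, R.comp_refl_self (pos_subset hδ.1),
      LinearMap.neg_comp] at hneg
    obtain ⟨i, hi⟩ := exists_refl_mul_eq_eraseIdx hv₀ (fun η hη => hL η (by simp [hη])) hδ.1 hneg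
    rw [List.map_cons, List.prod_cons, hi] at hpos ⊢
    exact ih _ (by simp at hn; have := L.length_eraseIdx_le i; omega) _
      (fun η hη => hL η (by simp [List.mem_of_mem_eraseIdx hη])) hpos rfl

lemma eq_of_apply_eq_apply (hv₀ : R.IsRegular v₀) {g g' : V ≃ₗ[ℝ] V} (hg : g ∈ R.weylGroup)
    (hg' : g' ∈ R.weylGroup) {d d' : V} (hd : d ∈ R.chamber v₀) (hd' : d' ∈ R.chamber v₀)
    (h : g d = g' d') : g = g' := by
  have hmem := mul_mem (inv_mem hg) hg'
  obtain ⟨L, hL, hLg⟩ := exists_list_simple hv₀ hmem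
  refine inv_mul_eq_one.1 (hLg ▸ prod_eq_one_of_forall_comp_mem_pos hv₀ L hL fun β hβ => ?_)
  rw [hLg]
  refine mem_pos_of_apply_pos hv₀ (R.comp_mem hmem (pos_subset hβ)) hd' ?_
  simpa [← h] using hd β hβ

lemma isRegular_sub (hv₀ : R.IsRegular v₀) {x y ℓ : V} (hy : ∀ α ∈ R.Φ, ∃ n : ℤ, α y = n)
    (hℓ : ℓ ∈ AddSubgroup.closure (R.coroot '' R.Φ))
    (hlt : ∀ α ∈ R.pos v₀, (∃ n : ℤ, α x = n) → α (y - x) < α ℓ) :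
    R.IsRegular (ℓ - (y - x)) := by
  refine isRegular_of_forall_pos hv₀ fun α hα h => ?_
  rw [map_sub, sub_eq_zero] at h
  by_cases hx : ∃ n : ℤ, α x = n
  · exact (hlt α hα hx).ne' h
  rw [map_sub] at h
  obtain ⟨m, hm⟩ := R.exists_int_apply_eq hℓ hα.1
  obtain ⟨n, hn⟩ := hy α hα.1
  exact hx ⟨n - m, by push_cast; linarith⟩

variable (R) in
lemma closure_image_eq_map {s : Dual ℝ V → Equiv.Perm V}
    (hs : ∀ α ∈ R.Φ, ∀ v : V, s α v = v - α v • R.coroot α) :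
    Subgroup.closure (s '' R.Φ) = R.weylGroup.map (MulAction.toPermHom _ V) := by
  rw [weylGroup, MonoidHom.map_closure, image_image]
  congr 1
  refine image_congr fun α hα => Equiv.ext fun v => ?_
  simp [hs α hα, R.refl_apply hα]

end ReducedRootSystem

theorem stmt_2_general (V : Type*) [AddCommGroup V] [Module ℝ V]
    (Φ : Set (Module.Dual ℝ V)) (hfin : Φ.Finite)
    (hspan : Submodule.span ℝ Φ = ⊤)
    (coroot : Module.Dual ℝ V → V)
    (hpair : ∀ α ∈ Φ, α (coroot α) = 2)
    (hrefl : ∀ α ∈ Φ, ∀ β ∈ Φ, β - β (coroot α) • α ∈ Φ)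
    (hcrys : ∀ α ∈ Φ, ∀ β ∈ Φ, ∃ n : ℤ, β (coroot α) = (n : ℝ))
    (hred : ∀ α ∈ Φ, ∀ c : ℝ, c • α ∈ Φ → c = 1 ∨ c = -1)
    -- the linear reflections `s α : v ↦ v − α(v) α^∨` for `α ∈ Φ`
    (s : Module.Dual ℝ V → Equiv.Perm V)
    (hs : ∀ α ∈ Φ, ∀ v : V, s α v = v - α v • coroot α)
    -- a positive system `Pos = Φ^+ ⊆ Φ`
    (Pos : Set (Module.Dual ℝ V))
    (hPos : ∃ v0 : V, (∀ α ∈ Φ, α v0 ≠ 0) ∧ Pos = {α ∈ Φ | 0 < α v0})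
    (x y : V)
    -- `y` is special
    (hy : ∀ α ∈ Φ, ∃ n : ℤ, α y = (n : ℝ)) :
    ({ℓ : V | ℓ ∈ AddSubgroup.closure (coroot '' Φ) ∧
        ∀ α ∈ Pos, (∃ n : ℤ, α x = (n : ℝ)) → α (y - x) < α ℓ} =
      ⋃ w ∈ {w : Equiv.Perm V | w ∈ Subgroup.closure (s '' Φ) ∧
          ⇑w '' {v : V | ∀ α ∈ Pos, 0 < α v} ⊆
            {v : V | ∀ α ∈ Pos, (∃ n : ℤ, α x = (n : ℝ)) → 0 < α v}},
        ({ℓ : V | ℓ ∈ AddSubgroup.closure (coroot '' Φ) ∧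
            ∀ α ∈ Pos, (∃ n : ℤ, α x = (n : ℝ)) → α (y - x) ≤ α ℓ} ∩
          {ℓ : V | ∃ d : V, (∀ α ∈ Pos, 0 < α d) ∧ ℓ = y - x + w d})) ∧
    ∀ w ∈ {w : Equiv.Perm V | w ∈ Subgroup.closure (s '' Φ) ∧
          ⇑w '' {v : V | ∀ α ∈ Pos, 0 < α v} ⊆
            {v : V | ∀ α ∈ Pos, (∃ n : ℤ, α x = (n : ℝ)) → 0 < α v}},
      ∀ w' ∈ {w : Equiv.Perm V | w ∈ Subgroup.closure (s '' Φ) ∧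
          ⇑w '' {v : V | ∀ α ∈ Pos, 0 < α v} ⊆
            {v : V | ∀ α ∈ Pos, (∃ n : ℤ, α x = (n : ℝ)) → 0 < α v}},
        w ≠ w' →
        Disjoint
          ({ℓ : V | ℓ ∈ AddSubgroup.closure (coroot '' Φ) ∧
              ∀ α ∈ Pos, (∃ n : ℤ, α x = (n : ℝ)) → α (y - x) ≤ α ℓ} ∩
            {ℓ : V | ∃ d : V, (∀ α ∈ Pos, 0 < α d) ∧ ℓ = y - x + w d})
          ({ℓ : V | ℓ ∈ AddSubgroup.closure (coroot '' Φ) ∧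
              ∀ α ∈ Pos, (∃ n : ℤ, α x = (n : ℝ)) → α (y - x) ≤ α ℓ} ∩
            {ℓ : V | ∃ d : V, (∀ α ∈ Pos, 0 < α d) ∧ ℓ = y - x + w' d}) := by
  obtain ⟨v₀, hv₀, rfl⟩ := hPos
  let R : ReducedRootSystem V := ⟨Φ, hfin, hspan, coroot, hpair, hrefl, hcrys, hred⟩
  have hW := R.closure_image_eq_map hs
  refine ⟨Set.ext fun ℓ => ⟨fun ⟨hℓ, hlt⟩ => ?_, ?_⟩, ?_⟩
  · obtain ⟨g, hg, d, hd, hgd⟩ :=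
      R.exists_apply_eq_of_isRegular (R.isRegular_sub hv₀ hy hℓ hlt) v₀
    refine mem_iUnion₂.2 ⟨MulAction.toPermHom _ V g, ⟨hW ▸ Subgroup.mem_map_of_mem _ hg, ?_⟩,
      ⟨hℓ, fun α hα hx => (hlt α hα hx).le⟩, d, hd, by simp [hgd]⟩
    rintro _ ⟨d', hd', rfl⟩ α hα hx
    exact R.apply_pos_of_apply_pos hv₀ hg hα.1 hd hd'
      (by simp only [hgd, map_sub]; linarith [hlt α hα hx, map_sub α y x])
  · simp only [mem_iUnion₂]
    rintro ⟨w, ⟨-, hw⟩, ⟨hℓ, -⟩, d, hd, rfl⟩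
    exact ⟨hℓ, fun α hα hx => by linarith [hw ⟨d, hd, rfl⟩ α hα hx, map_add α (y - x) (w d)]⟩
  · rintro w ⟨hw, -⟩ w' ⟨hw', -⟩ hne
    rw [hW] at hw hw'
    obtain ⟨g, hg, rfl⟩ := hw
    obtain ⟨g', hg', rfl⟩ := hw'
    refine Set.disjoint_left.2 fun _ ⟨_, d, hd, hℓ⟩ ⟨_, d', hd', hℓ'⟩ => hne ?_
    rw [R.eq_of_apply_eq_apply hv₀ hg hg' hd hd' (by simpa [hℓ] using hℓ')]

/-- Let `Φ ⊂ V*` be a finite reduced crystallographic root system spanning `V*`, with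
coroot lattice `Q` and finite Weyl group `W₀` generated by the reflections `s α`.  Fix a
positive system `Pos ⊆ Φ` with positive cone `D`, let `x ∈ V`, let `y ∈ V` be special,
and set `Υ_x = {w ∈ W₀ : wD ⊆ D_x}`.  Then `int(X_{x,y}^+)` is the union over `w ∈ Υ_x`
of the sets `X_{x,y}^+ ∩ (y − x + wD)`, and these sets are pairwise disjoint. -/
theorem stmt_2 (V : Type*) [AddCommGroup V] [Module ℝ V] [FiniteDimensional ℝ V]
    (Φ : Set (Module.Dual ℝ V)) (hfin : Φ.Finite) (h0 : (0 : Module.Dual ℝ V) ∉ Φ)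
    (hspan : Submodule.span ℝ Φ = ⊤)
    (coroot : Module.Dual ℝ V → V)
    (hpair : ∀ α ∈ Φ, α (coroot α) = 2)
    (hreflco : ∀ α ∈ Φ, ∀ β ∈ Φ, coroot β - α (coroot β) • coroot α ∈ coroot '' Φ)
    (hrefl : ∀ α ∈ Φ, ∀ β ∈ Φ, β - β (coroot α) • α ∈ Φ)
    (hcrys : ∀ α ∈ Φ, ∀ β ∈ Φ, ∃ n : ℤ, β (coroot α) = (n : ℝ))
    (hred : ∀ α ∈ Φ, ∀ c : ℝ, c • α ∈ Φ → c = 1 ∨ c = -1)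
    -- the linear reflections `s α : v ↦ v − α(v) α^∨` for `α ∈ Φ`
    (s : Module.Dual ℝ V → Equiv.Perm V)
    (hs : ∀ α ∈ Φ, ∀ v : V, s α v = v - α v • coroot α)
    -- a positive system `Pos = Φ^+ ⊆ Φ`
    (Pos : Set (Module.Dual ℝ V))
    (hPos : ∃ v0 : V, (∀ α ∈ Φ, α v0 ≠ 0) ∧ Pos = {α ∈ Φ | 0 < α v0})
    (x y : V)
    -- `y` is special
    (hy : ∀ α ∈ Φ, ∃ n : ℤ, α y = (n : ℝ)) :
    ({ℓ : V | ℓ ∈ AddSubgroup.closure (coroot '' Φ) ∧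
        ∀ α ∈ Pos, (∃ n : ℤ, α x = (n : ℝ)) → α (y - x) < α ℓ} =
      ⋃ w ∈ {w : Equiv.Perm V | w ∈ Subgroup.closure (s '' Φ) ∧
          ⇑w '' {v : V | ∀ α ∈ Pos, 0 < α v} ⊆
            {v : V | ∀ α ∈ Pos, (∃ n : ℤ, α x = (n : ℝ)) → 0 < α v}},
        ({ℓ : V | ℓ ∈ AddSubgroup.closure (coroot '' Φ) ∧
            ∀ α ∈ Pos, (∃ n : ℤ, α x = (n : ℝ)) → α (y - x) ≤ α ℓ} ∩
          {ℓ : V | ∃ d : V, (∀ α ∈ Pos, 0 < α d) ∧ ℓ = y - x + w d})) ∧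
    ∀ w ∈ {w : Equiv.Perm V | w ∈ Subgroup.closure (s '' Φ) ∧
          ⇑w '' {v : V | ∀ α ∈ Pos, 0 < α v} ⊆
            {v : V | ∀ α ∈ Pos, (∃ n : ℤ, α x = (n : ℝ)) → 0 < α v}},
      ∀ w' ∈ {w : Equiv.Perm V | w ∈ Subgroup.closure (s '' Φ) ∧
          ⇑w '' {v : V | ∀ α ∈ Pos, 0 < α v} ⊆
            {v : V | ∀ α ∈ Pos, (∃ n : ℤ, α x = (n : ℝ)) → 0 < α v}},
        w ≠ w' →
        Disjoint
          ({ℓ : V | ℓ ∈ AddSubgroup.closure (coroot '' Φ) ∧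
              ∀ α ∈ Pos, (∃ n : ℤ, α x = (n : ℝ)) → α (y - x) ≤ α ℓ} ∩
            {ℓ : V | ∃ d : V, (∀ α ∈ Pos, 0 < α d) ∧ ℓ = y - x + w d})
          ({ℓ : V | ℓ ∈ AddSubgroup.closure (coroot '' Φ) ∧
              ∀ α ∈ Pos, (∃ n : ℤ, α x = (n : ℝ)) → α (y - x) ≤ α ℓ} ∩
            {ℓ : V | ∃ d : V, (∀ α ∈ Pos, 0 < α d) ∧ ℓ = y - x + w' d}) :=
  stmt_2_general V Φ hfin hspan coroot hpair hrefl hcrys hred s hs Pos hPos x y hy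
end

section
/- For every x ∈ V and every real number r ≥ 0, the set {z ∈ V : |⟨α, x − z⟩| ≤ r for all α ∈ Φ^l} coincides with the set {z ∈ V : |⟨α, x − z⟩| ≤ r for all α ∈ Φ}. Equivalently, for every v ∈ V, if |⟨α, v⟩| ≤ r for all long roots α then |⟨β, v⟩| ≤ r for all roots β. -/
/-!
If `β` is a short root, irreducibility provides a long root `α` with `⟪β, α⟫ > 0`. Since
`‖β‖ < ‖α‖`, integrality forces `2⟪β, α⟫ = ⟪α, α⟫`, so `m = 2⟪α, β⟫/⟪β, β⟫` is an integer
`≥ 2`. Then `α` and its reflection `α - m β` are both long, and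
`m ⟪β, v⟫ = ⟪α, v⟫ - ⟪α - m β, v⟫` gives `m |⟪β, v⟫| ≤ 2r`.
-/

open scoped RealInnerProductSpace

namespace RootSystemBound

variable {V : Type*} [NormedAddCommGroup V]

def longRoots (Φ : Set V) : Set V := {α ∈ Φ | ∀ β ∈ Φ, ‖β‖ ≤ ‖α‖}

theorem longRoots_nonempty {Φ : Set V} (hfin : Φ.Finite) (hne : Φ.Nonempty) :
    (longRoots Φ).Nonempty := by
  obtain ⟨μ, hμ, hμmax⟩ := hfin.exists_maximalFor (fun γ => ‖γ‖) Φ hne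
  exact ⟨μ, hμ, fun δ hδ => (le_total ‖δ‖ ‖μ‖).elim id (hμmax hδ)⟩

variable [InnerProductSpace ℝ V]

def IsCrystallographic (Φ : Set V) : Prop :=
  ∀ α ∈ Φ, ∀ β ∈ Φ, ∃ n : ℤ, 2 * ⟪β, α⟫ / ⟪α, α⟫ = (n : ℝ)

def IsReflectionClosed (Φ : Set V) : Prop :=
  ∀ α ∈ Φ, ∀ β ∈ Φ, β - (2 * ⟪β, α⟫ / ⟪α, α⟫) • α ∈ Φ

def IsIrreducible (Φ : Set V) : Prop :=
  ∀ Φ₁ Φ₂ : Set V, Φ₁.Nonempty → Φ₂.Nonempty → Φ₁ ∪ Φ₂ = Φ →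
    (∀ a ∈ Φ₁, ∀ b ∈ Φ₂, ⟪a, b⟫ = 0) → False

theorem norm_sub_two_inner_div_smul (α β : V) :
    ‖β - (2 * ⟪β, α⟫ / ⟪α, α⟫) • α‖ = ‖β‖ := by
  rcases eq_or_ne α 0 with rfl | hα
  · simp
  have hαα : ⟪α, α⟫ ≠ 0 := inner_self_ne_zero.mpr hα
  rw [← sq_eq_sq₀ (norm_nonneg _) (norm_nonneg _), ← real_inner_self_eq_norm_sq,
    ← real_inner_self_eq_norm_sq]
  simp only [inner_sub_left, inner_sub_right, real_inner_smul_left, real_inner_smul_right,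
    real_inner_comm β α]
  field_simp
  ring

theorem reflection_mem_longRoots {Φ : Set V} (hrefl : IsReflectionClosed Φ) {α β : V}
    (hα : α ∈ longRoots Φ) (hβ : β ∈ Φ) :
    α - (2 * ⟪α, β⟫ / ⟪β, β⟫) • β ∈ longRoots Φ :=
  ⟨hrefl β hβ α hα.1, by simpa only [norm_sub_two_inner_div_smul] using hα.2⟩

theorem neg_mem_longRoots {Φ : Set V} (hrefl : IsReflectionClosed Φ) {α : V}
    (hα : α ∈ longRoots Φ) : -α ∈ longRoots Φ := by
  rcases eq_or_ne α 0 with rfl | hα0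
  · simpa using hα
  have h := reflection_mem_longRoots hrefl hα hα.1
  rwa [mul_div_assoc, div_self (inner_self_ne_zero.mpr hα0), mul_one, two_smul,
    sub_add_cancel_left] at h

/-- `⟪a, s_b α⟫ = ⟪a, α⟫ - c ⟪a, b⟫` with `c ≠ 0`, and `s_b α` is long again. -/
theorem inner_eq_zero_of_forall_longRoots {Φ : Set V} (hrefl : IsReflectionClosed Φ)
    {a b α : V} (ha : ∀ γ ∈ longRoots Φ, ⟪a, γ⟫ = 0) (hb : b ∈ Φ) (hα : α ∈ longRoots Φ)
    (hbα : ⟪b, α⟫ ≠ 0) : ⟪a, b⟫ = 0 := by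
  have hb0 : b ≠ 0 := by rintro rfl; simp at hbα
  have hc : 2 * ⟪α, b⟫ / ⟪b, b⟫ ≠ 0 := by
    rw [real_inner_comm]
    exact div_ne_zero (mul_ne_zero two_ne_zero hbα) (inner_self_ne_zero.mpr hb0)
  have h := ha _ (reflection_mem_longRoots hrefl hα hb)
  rw [inner_sub_right, real_inner_smul_right, ha α hα, zero_sub, neg_eq_zero] at h
  exact (mul_eq_zero.mp h).resolve_left hc

theorem exists_longRoots_inner_pos {Φ : Set V} (hrefl : IsReflectionClosed Φ)
    (hfin : Φ.Finite) (h0 : (0 : V) ∉ Φ) (hirr : IsIrreducible Φ) {β : V} (hβ : β ∈ Φ) :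
    ∃ α ∈ longRoots Φ, 0 < ⟪β, α⟫ := by
  have hne0 : ∀ γ ∈ Φ, γ ≠ 0 := fun γ hγ h => h0 (h ▸ hγ)
  obtain ⟨α, hα, hβα⟩ : ∃ α ∈ longRoots Φ, ⟪β, α⟫ ≠ 0 := by
    by_contra! hβorth
    let Φ₁ : Set V := {γ ∈ Φ | ∀ α ∈ longRoots Φ, ⟪γ, α⟫ = 0}
    obtain ⟨μ, hμ⟩ := longRoots_nonempty hfin ⟨β, hβ⟩
    refine hirr Φ₁ (Φ \ Φ₁) ⟨β, hβ, hβorth⟩ ⟨μ, hμ.1, fun h => hne0 μ hμ.1 ?_⟩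
      (Set.union_sdiff_cancel fun γ hγ => hγ.1) fun a ha b hb => ?_
    · exact inner_self_eq_zero.mp (h.2 μ hμ)
    · by_contra hab
      refine hb.2 ⟨hb.1, fun α hα => by_contra fun hbα => hab ?_⟩
      exact inner_eq_zero_of_forall_longRoots hrefl ha.2 hb.1 hα hbα
  rcases hβα.lt_or_gt with hneg | hpos
  · refine ⟨-α, neg_mem_longRoots hrefl hα, ?_⟩
    rw [inner_neg_right]
    linarith
  · exact ⟨α, hα, hpos⟩

/-- The Cartan integer of a longer root against a shorter one, at an acute angle, is at least
`2`: the Cartan integer the other way round lies in `(0, 2)`, hence equals `1`. -/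
theorem two_le_two_inner_div_of_norm_lt {α β : V} (hβ0 : β ≠ 0) (hlt : ‖β‖ < ‖α‖)
    (hpos : 0 < ⟪β, α⟫) (hn : ∃ n : ℤ, 2 * ⟪β, α⟫ / ⟪α, α⟫ = n)
    (hm : ∃ m : ℤ, 2 * ⟪α, β⟫ / ⟪β, β⟫ = m) :
    2 ≤ 2 * ⟪α, β⟫ / ⟪β, β⟫ := by
  obtain ⟨n, hn⟩ := hn
  obtain ⟨m, hm⟩ := hm
  have hβ : 0 < ‖β‖ := norm_pos_iff.mpr hβ0
  have hαα : 0 < ⟪α, α⟫ := by rw [real_inner_self_eq_norm_sq]; nlinarith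
  have hββ : 0 < ⟪β, β⟫ := by rw [real_inner_self_eq_norm_sq]; positivity
  have hCS : ⟪β, α⟫ ≤ ‖β‖ * ‖α‖ := real_inner_le_norm β α
  have hn1 : n = 1 := by
    have h0n : (0 : ℝ) < n := hn ▸ div_pos (by linarith) hαα
    have hn2 : (n : ℝ) < 2 := by
      rw [← hn, div_lt_iff₀ hαα, real_inner_self_eq_norm_sq]
      nlinarith
    have : 0 < n ∧ n < 2 := ⟨by exact_mod_cast h0n, by exact_mod_cast hn2⟩
    omega
  have hβα : 2 * ⟪β, α⟫ = ⟪α, α⟫ := by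
    rw [hn1, Int.cast_one, div_eq_one_iff_eq hαα.ne'] at hn
    exact hn
  have hm1 : (1 : ℝ) < m := by
    rw [← hm, lt_div_iff₀ hββ, one_mul, real_inner_comm β α, hβα, real_inner_self_eq_norm_sq,
      real_inner_self_eq_norm_sq]
    nlinarith
  rw [hm]
  exact_mod_cast (show (1 : ℤ) < m by exact_mod_cast hm1)

theorem abs_inner_le_of_abs_inner_sub_smul_le {α β v : V} {c r : ℝ} (hc : 2 ≤ c)
    (hα : |⟪α, v⟫| ≤ r) (hαβ : |⟪α - c • β, v⟫| ≤ r) : |⟪β, v⟫| ≤ r := by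
  have hsplit : c * ⟪β, v⟫ = ⟪α, v⟫ - ⟪α - c • β, v⟫ := by
    rw [inner_sub_left, real_inner_smul_left]
    ring
  have hbound : c * |⟪β, v⟫| ≤ 2 * r := by
    calc c * |⟪β, v⟫| = |⟪α, v⟫ - ⟪α - c • β, v⟫| := by
          rw [← hsplit, abs_mul, abs_of_pos (show 0 < c by linarith)]
      _ ≤ |⟪α, v⟫| + |⟪α - c • β, v⟫| := abs_sub _ _
      _ ≤ 2 * r := by linarith
  nlinarith [abs_nonneg ⟪β, v⟫]

theorem abs_inner_le_of_forall_longRoots {Φ : Set V} (hfin : Φ.Finite) (h0 : (0 : V) ∉ Φ)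
    (hcrys : IsCrystallographic Φ) (hrefl : IsReflectionClosed Φ) (hirr : IsIrreducible Φ)
    {v : V} {r : ℝ} (hv : ∀ α ∈ longRoots Φ, |⟪α, v⟫| ≤ r) {β : V} (hβ : β ∈ Φ) :
    |⟪β, v⟫| ≤ r := by
  by_cases hβl : β ∈ longRoots Φ
  · exact hv β hβl
  obtain ⟨γ, hγ, hβγ⟩ : ∃ γ ∈ Φ, ‖β‖ < ‖γ‖ := by
    simpa [longRoots, hβ] using hβl
  obtain ⟨α, hα, hβα⟩ := exists_longRoots_inner_pos hrefl hfin h0 hirr hβ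
  have hc := two_le_two_inner_div_of_norm_lt (fun h => h0 (h ▸ hβ))
    (hβγ.trans_le (hα.2 γ hγ)) hβα (hcrys α hα.1 β hβ) (hcrys β hβ α hα.1)
  exact abs_inner_le_of_abs_inner_sub_smul_le hc (hv α hα)
    (hv _ (reflection_mem_longRoots hrefl hα hβ))

end RootSystemBound

open RootSystemBound in
theorem stmt_4_general (V : Type*) [NormedAddCommGroup V] [InnerProductSpace ℝ V]
    (Φ : Set V) (hfin : Φ.Finite) (h0 : (0 : V) ∉ Φ)
    (hcrys : ∀ α ∈ Φ, ∀ β ∈ Φ, ∃ n : ℤ, 2 * ⟪β, α⟫ / ⟪α, α⟫ = (n : ℝ))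
    (hrefl : ∀ α ∈ Φ, ∀ β ∈ Φ, β - (2 * ⟪β, α⟫ / ⟪α, α⟫) • α ∈ Φ)
    (hirr : ∀ Φ₁ Φ₂ : Set V, Φ₁.Nonempty → Φ₂.Nonempty → Φ₁ ∪ Φ₂ = Φ →
      (∀ a ∈ Φ₁, ∀ b ∈ Φ₂, ⟪a, b⟫ = 0) → False) :
    ∀ (x : V) (r : ℝ), 0 ≤ r →
      ({z : V | ∀ α ∈ {α ∈ Φ | ∀ β ∈ Φ, ‖β‖ ≤ ‖α‖}, |⟪α, x - z⟫| ≤ r} =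
        {z : V | ∀ α ∈ Φ, |⟪α, x - z⟫| ≤ r}) ∧
      ∀ v : V, (∀ α ∈ {α ∈ Φ | ∀ β ∈ Φ, ‖β‖ ≤ ‖α‖}, |⟪α, v⟫| ≤ r) →
        ∀ β ∈ Φ, |⟪β, v⟫| ≤ r := by
  intro x r _
  have key : ∀ v : V, (∀ α ∈ longRoots Φ, |⟪α, v⟫| ≤ r) → ∀ β ∈ Φ, |⟪β, v⟫| ≤ r :=
    fun v hv β hβ => abs_inner_le_of_forall_longRoots hfin h0 hcrys hrefl hirr hv hβ
  refine ⟨Set.ext fun z => ⟨fun h => key _ h, fun h α hα => h α hα.1⟩, key⟩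

/-- Let `Φ` be a finite reduced crystallographic irreducible root system spanning a
finite-dimensional real inner product space `V`, and let
`Φ^l = {α ∈ Φ | ∀ β ∈ Φ, ‖β‖ ≤ ‖α‖}` be its long roots.  For every `x ∈ V` and `r ≥ 0`,
the set `{z | ∀ α ∈ Φ^l, |⟨α, x−z⟩| ≤ r}` coincides with `{z | ∀ α ∈ Φ, |⟨α, x−z⟩| ≤ r}`;
equivalently, if `|⟨α, v⟩| ≤ r` for all long roots `α` then `|⟨β, v⟩| ≤ r` for all roots
`β`. -/
theorem stmt_4 (V : Type*) [NormedAddCommGroup V] [InnerProductSpace ℝ V]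
    [FiniteDimensional ℝ V]
    (Φ : Set V) (hfin : Φ.Finite) (h0 : (0 : V) ∉ Φ)
    (hspan : Submodule.span ℝ Φ = ⊤)
    (hcrys : ∀ α ∈ Φ, ∀ β ∈ Φ, ∃ n : ℤ, 2 * ⟪β, α⟫ / ⟪α, α⟫ = (n : ℝ))
    (hrefl : ∀ α ∈ Φ, ∀ β ∈ Φ, β - (2 * ⟪β, α⟫ / ⟪α, α⟫) • α ∈ Φ)
    (hred : ∀ α ∈ Φ, ∀ c : ℝ, c • α ∈ Φ → c = 1 ∨ c = -1)
    (hirr : ∀ Φ₁ Φ₂ : Set V, Φ₁.Nonempty → Φ₂.Nonempty → Φ₁ ∪ Φ₂ = Φ →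
      (∀ a ∈ Φ₁, ∀ b ∈ Φ₂, ⟪a, b⟫ = 0) → False) :
    ∀ (x : V) (r : ℝ), 0 ≤ r →
      ({z : V | ∀ α ∈ {α ∈ Φ | ∀ β ∈ Φ, ‖β‖ ≤ ‖α‖}, |⟪α, x - z⟫| ≤ r} =
        {z : V | ∀ α ∈ Φ, |⟪α, x - z⟫| ≤ r}) ∧
      ∀ v : V, (∀ α ∈ {α ∈ Φ | ∀ β ∈ Φ, ‖β‖ ≤ ‖α‖}, |⟪α, v⟫| ≤ r) →
        ∀ β ∈ Φ, |⟪β, v⟫| ≤ r :=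
  stmt_4_general V Φ hfin h0 hcrys hrefl hirr
end

section
/- Let x ∈ V and set Υ_x = {w ∈ W₀ : wD ⊆ D_x}. Then the topological closure of D_x equals the union over w ∈ Υ_x of the sets w·(closure of D); that is, the closed dominant cone of the subsystem Φ_x^lin is the union of the closed Weyl chambers of Φ that it contains. -/
/-!
Both sides are closed cones cut out by roots. Given `v` in the closure of `D_x`, push it slightly
towards the regular point `v₀` defining `Φ⁺`: for small `t > 0` the point `y = v + t (v₀ - v)` is
regular, lies in `D_x`, and no root changes sign strictly between `v` and `y`. Some `w ∈ W₀` moves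
`y` into `D`: on the finite orbit of `y` take a point maximising `ρ = ∑_{α ∈ Φ⁺} α`; since
`ρ(β^∨) > 0` for `β ∈ Φ⁺`, the reflection `s_β` would increase `ρ` if `β` were negative there.
Then `w⁻¹ D` is the chamber of `y`, which lies in `D_x`, and `v` lies in its closure.
-/

open Module Set Filter Topology

theorem Finset.sum_comp_lt_sum_of_injOn {ι M : Type*} [DecidableEq ι] [AddCommGroup M]
    [LinearOrder M] [IsOrderedAddMonoid M] {s : Finset ι} {f : ι → M} {σ : ι → ι}
    (hσ : InjOn σ s) (hf : ∀ i ∈ s, 0 < f i) (hout : ∀ i ∈ s, σ i ∉ s → f (σ i) < 0)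
    {j : ι} (hj : j ∈ s) (hσj : σ j ∉ s) :
    ∑ i ∈ s, f (σ i) < ∑ i ∈ s, f i := by
  rw [← Finset.sum_filter_add_sum_filter_not s (fun i => σ i ∈ s)]
  have h_in : ∑ i ∈ s with σ i ∈ s, f (σ i) ≤ ∑ i ∈ s, f i := by
    rw [← Finset.sum_image (hσ.mono (Finset.coe_subset.2 (Finset.filter_subset _ _)))]
    refine Finset.sum_le_sum_of_subset_of_nonneg ?_ fun i hi _ => (hf i hi).le
    exact Finset.image_subset_iff.2 fun i hi => (Finset.mem_filter.1 hi).2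
  have h_out : ∑ i ∈ s with σ i ∉ s, f (σ i) < 0 :=
    Finset.sum_neg (fun i hi => hout i (Finset.mem_filter.1 hi).1 (Finset.mem_filter.1 hi).2)
      ⟨j, Finset.mem_filter.2 ⟨hj, hσj⟩⟩
  calc _ < ∑ i ∈ s, f i + 0 := add_lt_add_of_le_of_lt h_in h_out
    _ = _ := add_zero _

section RootAutomorphisms

variable {V : Type*} [AddCommGroup V] [Module ℝ V]

def rootAutomorphisms (Φ : Set (Dual ℝ V)) : Subgroup (V ≃ₗ[ℝ] V) where
  carrier := {L | ∀ α : Dual ℝ V, α ∘ₗ L.toLinearMap ∈ Φ ↔ α ∈ Φ}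
  one_mem' α := by simp
  mul_mem' {L₁ L₂} h₁ h₂ α := (h₂ (α ∘ₗ L₁.toLinearMap)).trans (h₁ α)
  inv_mem' {L} h α := by
    show α ∘ₗ L.symm.toLinearMap ∈ Φ ↔ α ∈ Φ
    simpa [LinearMap.comp_assoc] using (h (α ∘ₗ L.symm.toLinearMap)).symm

theorem reflection_mem_rootAutomorphisms {Φ : Set (Dual ℝ V)} {α : Dual ℝ V} {c : V}
    (h : α c = 2) (hΦ : ∀ β ∈ Φ, β - β c • α ∈ Φ) :
    Module.reflection h ∈ rootAutomorphisms Φ := by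
  have hcomp (β : Dual ℝ V) : β ∘ₗ (Module.reflection h).toLinearMap = β - β c • α := by
    ext v
    simp only [LinearMap.coe_comp, LinearEquiv.coe_coe, Function.comp_apply,
      Module.reflection_apply, map_sub, map_smul, smul_eq_mul, LinearMap.sub_apply,
      LinearMap.smul_apply, sub_right_inj]
    ring
  intro β
  refine ⟨fun hβ => ?_, fun hβ => hcomp β ▸ hΦ β hβ⟩
  have hinv :
      (β ∘ₗ (Module.reflection h).toLinearMap) ∘ₗ (Module.reflection h).toLinearMap = β := by
    ext v
    simp [Module.involutive_reflection h v]
  rw [← hinv, hcomp]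
  exact hΦ _ hβ

theorem finite_rootAutomorphisms {Φ : Set (Dual ℝ V)} (hfin : Φ.Finite)
    (hspan : Submodule.span ℝ Φ = ⊤) : Finite (rootAutomorphisms Φ) := by
  have := hfin.to_subtype
  refine Finite.of_injective (fun L (α : Φ) => (⟨α.1 ∘ₗ L.1.toLinearMap, (L.2 α).2 α.2⟩ : Φ))
    fun L L' hLL' => Subtype.ext <| LinearEquiv.ext fun v => ?_
  refine Module.eval_apply_injective ℝ (LinearMap.ext_on hspan fun α hα => ?_)
  exact LinearMap.congr_fun (congr_arg Subtype.val (congr_fun hLL' ⟨α, hα⟩)) v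

end RootAutomorphisms

section RootSystem

variable {V : Type*} [AddCommGroup V] [Module ℝ V] {Φ : Set (Dual ℝ V)}
  {coroot : Dual ℝ V → V} {s : Dual ℝ V → Equiv.Perm V} {v₀ : V}

theorem closure_reflections_le_map_rootAutomorphisms (hpair : ∀ α ∈ Φ, α (coroot α) = 2)
    (hrefl : ∀ α ∈ Φ, ∀ β ∈ Φ, β - β (coroot α) • α ∈ Φ)
    (hs : ∀ α ∈ Φ, ∀ v : V, s α v = v - α v • coroot α) :
    Subgroup.closure (s '' Φ) ≤
      (rootAutomorphisms Φ).map (MulAction.toPermHom (V ≃ₗ[ℝ] V) V) := by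
  rw [Subgroup.closure_le]
  rintro _ ⟨α, hα, rfl⟩
  refine ⟨Module.reflection (hpair α hα), reflection_mem_rootAutomorphisms _ (hrefl α hα), ?_⟩
  ext v
  simp [hs α hα, Module.reflection_apply, LinearEquiv.smul_def]

theorem exists_linearEquiv_of_mem_closure_reflections (hpair : ∀ α ∈ Φ, α (coroot α) = 2)
    (hrefl : ∀ α ∈ Φ, ∀ β ∈ Φ, β - β (coroot α) • α ∈ Φ)
    (hs : ∀ α ∈ Φ, ∀ v : V, s α v = v - α v • coroot α) {w : Equiv.Perm V}
    (hw : w ∈ Subgroup.closure (s '' Φ)) : ∃ L ∈ rootAutomorphisms Φ, ⇑w = ⇑L := by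
  obtain ⟨L, hL, rfl⟩ := closure_reflections_le_map_rootAutomorphisms hpair hrefl hs hw
  exact ⟨L, hL, rfl⟩

theorem finite_closure_reflections (hfin : Φ.Finite) (hspan : Submodule.span ℝ Φ = ⊤)
    (hpair : ∀ α ∈ Φ, α (coroot α) = 2)
    (hrefl : ∀ α ∈ Φ, ∀ β ∈ Φ, β - β (coroot α) • α ∈ Φ)
    (hs : ∀ α ∈ Φ, ∀ v : V, s α v = v - α v • coroot α) :
    Finite (Subgroup.closure (s '' Φ)) := by
  have := finite_rootAutomorphisms hfin hspan
  refine Set.Finite.to_subtype (((rootAutomorphisms Φ : Set (V ≃ₗ[ℝ] V)).toFinite.image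
    (MulAction.toPermHom (V ≃ₗ[ℝ] V) V)).subset fun w hw => ?_)
  simpa using closure_reflections_le_map_rootAutomorphisms hpair hrefl hs hw

theorem neg_mem_of_reflection_mem (hpair : ∀ α ∈ Φ, α (coroot α) = 2)
    (hrefl : ∀ α ∈ Φ, ∀ β ∈ Φ, β - β (coroot α) • α ∈ Φ) {β : Dual ℝ V} (hβ : β ∈ Φ) :
    -β ∈ Φ := by
  have h := hrefl β hβ β hβ
  rwa [hpair β hβ, two_smul, sub_add_cancel_left] at h

theorem apply_pos_of_apply_pos_of_forall_pos (hneg : ∀ β ∈ Φ, -β ∈ Φ)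
    (hv₀ : ∀ α ∈ Φ, α v₀ ≠ 0) {u : V} (hu : ∀ α ∈ Φ, 0 < α v₀ → 0 < α u) {β : Dual ℝ V}
    (hβ : β ∈ Φ) (hβu : 0 < β u) :
    0 < β v₀ := by
  refine (hv₀ β hβ).lt_or_gt.resolve_left fun hβv₀ => ?_
  have := hu (-β) (hneg β hβ) (by simpa using hβv₀)
  simp only [LinearMap.neg_apply, Left.neg_pos_iff] at this
  linarith

theorem sum_pos_roots_apply_coroot_pos (hfin : Φ.Finite) (hpair : ∀ α ∈ Φ, α (coroot α) = 2)
    (hrefl : ∀ α ∈ Φ, ∀ β ∈ Φ, β - β (coroot α) • α ∈ Φ) (hv₀ : ∀ α ∈ Φ, α v₀ ≠ 0)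
    {β : Dual ℝ V} (hβ : β ∈ Φ) (hβv₀ : 0 < β v₀) :
    0 < ∑ α ∈ hfin.toFinset with 0 < α v₀, α (coroot β) := by
  classical
  set P := hfin.toFinset.filter (0 < · v₀)
  have hP {α : Dual ℝ V} : α ∈ P ↔ α ∈ Φ ∧ 0 < α v₀ := by simp [P]
  let σ : Dual ℝ V → Dual ℝ V := fun α => α - α (coroot β) • β
  have hσσ : Function.Involutive σ := fun α => by
    simp only [σ, LinearMap.sub_apply, LinearMap.smul_apply, smul_eq_mul, hpair β hβ]
    module
  have hσβ : σ β = -β := by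
    simp only [σ, hpair β hβ]
    module
  have hlt : ∑ α ∈ P, (σ α) v₀ < ∑ α ∈ P, α v₀ := by
    refine Finset.sum_comp_lt_sum_of_injOn hσσ.injective.injOn (fun α hα => (hP.1 hα).2)
      (fun α hα hσα => ?_) (hP.2 ⟨hβ, hβv₀⟩) ?_
    · have hσαΦ : σ α ∈ Φ := hrefl β hβ α (hP.1 hα).1
      exact (hv₀ _ hσαΦ).lt_or_gt.resolve_right fun h => hσα (hP.2 ⟨hσαΦ, h⟩)
    · rw [hσβ, hP]
      simp [hβv₀.le]
  have hsum : ∑ α ∈ P, (σ α) v₀ = ∑ α ∈ P, α v₀ - (∑ α ∈ P, α (coroot β)) * β v₀ := by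
    simp only [σ, LinearMap.sub_apply, LinearMap.smul_apply, smul_eq_mul, Finset.sum_sub_distrib,
      Finset.sum_mul]
  have hmul : 0 < (∑ α ∈ P, α (coroot β)) * β v₀ := by linarith
  exact pos_of_mul_pos_left hmul hβv₀.le

theorem exists_mem_closure_reflections_forall_nonneg (hfin : Φ.Finite)
    (hspan : Submodule.span ℝ Φ = ⊤) (hpair : ∀ α ∈ Φ, α (coroot α) = 2)
    (hrefl : ∀ α ∈ Φ, ∀ β ∈ Φ, β - β (coroot α) • α ∈ Φ)
    (hs : ∀ α ∈ Φ, ∀ v : V, s α v = v - α v • coroot α) (hv₀ : ∀ α ∈ Φ, α v₀ ≠ 0) (y : V) :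
    ∃ w ∈ Subgroup.closure (s '' Φ), ∀ α ∈ Φ, 0 < α v₀ → 0 ≤ α (w y) := by
  set W := Subgroup.closure (s '' Φ)
  have := finite_closure_reflections hfin hspan hpair hrefl hs
  set P := hfin.toFinset.filter (0 < · v₀)
  obtain ⟨w, hmax⟩ := Finite.exists_max fun w : W => ∑ α ∈ P, α (w.1 y)
  refine ⟨w, w.2, fun β hβ hβv₀ => not_lt.1 fun hneg => ?_⟩
  have hsβw : s β * w ∈ W := W.mul_mem (Subgroup.subset_closure ⟨β, hβ, rfl⟩) w.2
  have hsum : ∑ α ∈ P, α ((s β * w) y) =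
      ∑ α ∈ P, α (w.1 y) - β (w.1 y) * ∑ α ∈ P, α (coroot β) := by
    simp only [Equiv.Perm.mul_apply, hs β hβ, map_sub, map_smul, smul_eq_mul,
      Finset.sum_sub_distrib, Finset.mul_sum]
  have hρ := sum_pos_roots_apply_coroot_pos hfin hpair hrefl hv₀ hβ hβv₀
  linarith [hmax ⟨_, hsβw⟩, mul_pos (neg_pos.2 hneg) hρ]

theorem exists_mem_closure_reflections_forall_pos (hfin : Φ.Finite)
    (hspan : Submodule.span ℝ Φ = ⊤) (hpair : ∀ α ∈ Φ, α (coroot α) = 2)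
    (hrefl : ∀ α ∈ Φ, ∀ β ∈ Φ, β - β (coroot α) • α ∈ Φ)
    (hs : ∀ α ∈ Φ, ∀ v : V, s α v = v - α v • coroot α) (hv₀ : ∀ α ∈ Φ, α v₀ ≠ 0) {y : V}
    (hy : ∀ γ ∈ Φ, γ y ≠ 0) :
    ∃ w ∈ Subgroup.closure (s '' Φ), ∀ α ∈ Φ, 0 < α v₀ → 0 < α (w y) := by
  obtain ⟨w, hw, hdom⟩ :=
    exists_mem_closure_reflections_forall_nonneg hfin hspan hpair hrefl hs hv₀ y
  obtain ⟨L, hL, hwL⟩ := exists_linearEquiv_of_mem_closure_reflections hpair hrefl hs hw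
  refine ⟨w, hw, fun α hα hαv₀ => (hdom α hα hαv₀).lt_of_ne' ?_⟩
  rw [hwL]
  exact hy _ ((hL α).2 hα)

theorem exists_mem_Ioo_forall_pos_mul (hfin : Φ.Finite) (v v₀ : V) :
    ∃ t ∈ Ioo (0 : ℝ) 1, ∀ γ ∈ Φ, γ v ≠ 0 → 0 < γ v * γ (v + t • (v₀ - v)) := by
  have hnear (γ : Dual ℝ V) : ∀ᶠ t in 𝓝 (0 : ℝ), γ v ≠ 0 → 0 < γ v * γ (v + t • (v₀ - v)) := by
    by_cases hγ : γ v = 0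
    · exact Eventually.of_forall fun _ h => absurd hγ h
    have hlim : Tendsto (fun t : ℝ => γ v * γ (v + t • (v₀ - v))) (𝓝 0) (𝓝 (γ v * γ v)) := by
      simp only [map_add, map_smul, smul_eq_mul]
      exact Continuous.tendsto' (by fun_prop) 0 _ (by simp)
    exact (hlim.eventually (lt_mem_nhds (mul_self_pos.2 hγ))).mono fun _ h _ => h
  have hall : ∀ᶠ t in 𝓝[>] (0 : ℝ), ∀ γ ∈ Φ, γ v ≠ 0 → 0 < γ v * γ (v + t • (v₀ - v)) :=
    ((eventually_all_finite hfin).2 fun γ _ => hnear γ).filter_mono nhdsWithin_le_nhds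
  obtain ⟨t, ht, hIoo⟩ := (hall.and (Ioo_mem_nhdsGT one_pos)).exists
  exact ⟨t, hIoo, ht⟩

theorem exists_mem_closure_reflections_image_chamber_subset (hfin : Φ.Finite)
    (hspan : Submodule.span ℝ Φ = ⊤) (hpair : ∀ α ∈ Φ, α (coroot α) = 2)
    (hrefl : ∀ α ∈ Φ, ∀ β ∈ Φ, β - β (coroot α) • α ∈ Φ)
    (hs : ∀ α ∈ Φ, ∀ v : V, s α v = v - α v • coroot α) (hv₀ : ∀ α ∈ Φ, α v₀ ≠ 0)
    {S : Set (Dual ℝ V)} (hS : S ⊆ {α ∈ Φ | 0 < α v₀}) {v : V} (hv : ∀ α ∈ S, 0 ≤ α v) :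
    ∃ w ∈ Subgroup.closure (s '' Φ),
      w '' {u | ∀ α ∈ {α ∈ Φ | 0 < α v₀}, 0 < α u} ⊆ {u | ∀ α ∈ S, 0 < α u} ∧
      v ∈ w '' {u | ∀ α ∈ {α ∈ Φ | 0 < α v₀}, 0 ≤ α u} := by
  -- `y` is a regular point of the cone cut out by `S`, on the same side as `v` of every wall
  -- not containing `v`.
  obtain ⟨t, ht, hsign⟩ := exists_mem_Ioo_forall_pos_mul hfin v v₀
  set y := v + t • (v₀ - v)
  have hy (γ : Dual ℝ V) : γ y = (1 - t) * γ v + t * γ v₀ := by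
    simp only [y, map_add, map_smul, map_sub, smul_eq_mul]
    ring
  have hy_reg (γ : Dual ℝ V) (hγ : γ ∈ Φ) : γ y ≠ 0 := by
    by_cases hγv : γ v = 0
    · simpa [hy, hγv, ht.1.ne'] using hv₀ γ hγ
    · exact right_ne_zero_of_mul (hsign γ hγ hγv).ne'
  have hyS (α : Dual ℝ V) (hα : α ∈ S) : 0 < α y := by
    have := (hS hα).2
    have := hv α hα
    rw [hy]
    nlinarith [ht.1, ht.2]
  obtain ⟨w, hw, hwy⟩ :=
    exists_mem_closure_reflections_forall_pos hfin hspan hpair hrefl hs hv₀ hy_reg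
  obtain ⟨L, hL, hwL⟩ := exists_linearEquiv_of_mem_closure_reflections hpair hrefl hs hw
  have hw_inv (u : V) : w⁻¹ u = L.symm u := w.injective (by simp [hwL])
  refine ⟨w⁻¹, inv_mem hw, ?_, w v, ?_, by simp⟩
  · rintro _ ⟨u, hu, rfl⟩ α hα
    set β := α ∘ₗ L.symm.toLinearMap
    have hβL : β ∘ₗ L.toLinearMap = α := by ext; simp [β]
    have hβ : β ∈ Φ := (hL β).1 (hβL ▸ (hS hα).1)
    have hβwy : 0 < β (w y) := by
      rw [hwL]
      simpa [β] using hyS α hα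
    have hβv₀ := apply_pos_of_apply_pos_of_forall_pos
      (fun _ => neg_mem_of_reflection_mem hpair hrefl) hv₀ hwy hβ hβwy
    rw [hw_inv]
    exact hu β ⟨hβ, hβv₀⟩
  · intro α hα
    have hδ : α ∘ₗ L.toLinearMap ∈ Φ := (hL α).2 hα.1
    have hδy : 0 < (α ∘ₗ L.toLinearMap) y := by simpa [hwL] using hwy α hα.1 hα.2
    rw [hwL]
    by_contra! hδv
    exact (mul_nonpos_of_nonpos_of_nonneg hδv.le hδy.le).not_gt (hsign _ hδ hδv.ne)

end RootSystem

theorem closure_setOf_forall_pos {V : Type*} [NormedAddCommGroup V] [NormedSpace ℝ V]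
    [FiniteDimensional ℝ V] {S : Set (Dual ℝ V)} {p : V} (hp : ∀ f ∈ S, 0 < f p) :
    closure {v | ∀ f ∈ S, 0 < f v} = {v | ∀ f ∈ S, 0 ≤ f v} := by
  refine Subset.antisymm (closure_minimal (fun v hv f hf => (hv f hf).le) ?_) fun v hv => ?_
  · simp only [ofPred_forall]
    exact isClosed_biInter fun f _ =>
      isClosed_le continuous_const (LinearMap.continuous_of_finiteDimensional f)
  · have hlim : Tendsto (fun t : ℝ => v + t • (p - v)) (𝓝[>] 0) (𝓝 v) :=
      (Continuous.tendsto' (by fun_prop) 0 v (by simp)).mono_left nhdsWithin_le_nhds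
    refine mem_closure_of_tendsto hlim ?_
    filter_upwards [Ioo_mem_nhdsGT one_pos] with t ht f hf
    have := hv f hf
    have := hp f hf
    simp only [map_add, map_smul, map_sub, smul_eq_mul]
    nlinarith [ht.1, ht.2]

theorem stmt_9_general (V : Type*) [NormedAddCommGroup V] [NormedSpace ℝ V]
    [FiniteDimensional ℝ V]
    (Φ : Set (Module.Dual ℝ V)) (hfin : Φ.Finite)
    (hspan : Submodule.span ℝ Φ = ⊤)
    (coroot : Module.Dual ℝ V → V)
    (hpair : ∀ α ∈ Φ, α (coroot α) = 2)
    (hrefl : ∀ α ∈ Φ, ∀ β ∈ Φ, β - β (coroot α) • α ∈ Φ)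
    -- the linear reflections `s α : v ↦ v − α(v) α^∨` for `α ∈ Φ`
    (s : Module.Dual ℝ V → Equiv.Perm V)
    (hs : ∀ α ∈ Φ, ∀ v : V, s α v = v - α v • coroot α)
    -- a positive system `Pos = Φ^+ ⊆ Φ`
    (Pos : Set (Module.Dual ℝ V))
    (hPos : ∃ v0 : V, (∀ α ∈ Φ, α v0 ≠ 0) ∧ Pos = {α ∈ Φ | 0 < α v0})
    (x : V) :
    closure {v : V | ∀ α ∈ Pos, (∃ n : ℤ, α x = (n : ℝ)) → 0 < α v} =
      ⋃ w ∈ {w : Equiv.Perm V | w ∈ Subgroup.closure (s '' Φ) ∧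
          ⇑w '' {v : V | ∀ α ∈ Pos, 0 < α v} ⊆
            {v : V | ∀ α ∈ Pos, (∃ n : ℤ, α x = (n : ℝ)) → 0 < α v}},
        ⇑w '' closure {v : V | ∀ α ∈ Pos, 0 < α v} := by
  obtain ⟨v₀, hv₀, rfl⟩ := hPos
  set S := {α ∈ {α ∈ Φ | 0 < α v₀} | ∃ n : ℤ, α x = n}
  have hDx : {v : V | ∀ α ∈ {α ∈ Φ | 0 < α v₀}, (∃ n : ℤ, α x = n) → 0 < α v} =
      {v | ∀ α ∈ S, 0 < α v} :=
    ext fun v => ⟨fun h α hα => h α hα.1 hα.2, fun h α hα hn => h α ⟨hα, hn⟩⟩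
  rw [hDx]
  refine Subset.antisymm (fun v hv => ?_) (iUnion₂_subset fun w ⟨hw, hwD⟩ => ?_)
  · rw [closure_setOf_forall_pos (S := S) (p := v₀) fun α hα => hα.1.2] at hv
    rw [closure_setOf_forall_pos (p := v₀) fun α hα => hα.2]
    obtain ⟨w, hw, hwD, hvw⟩ := exists_mem_closure_reflections_image_chamber_subset hfin hspan
      hpair hrefl hs hv₀ (S := S) (fun α hα => hα.1) hv
    exact mem_biUnion ⟨hw, hwD⟩ hvw
  · obtain ⟨L, -, hwL⟩ := exists_linearEquiv_of_mem_closure_reflections hpair hrefl hs hw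
    have hcont : Continuous w := hwL ▸ LinearMap.continuous_of_finiteDimensional L.toLinearMap
    exact (image_closure_subset_closure_image hcont).trans (closure_mono hwD)

/-- Let `Φ ⊂ V*` be a finite reduced crystallographic root system spanning `V*`, with
finite Weyl group `W₀` generated by the reflections `s α`.  Fix a positive system
`Pos ⊆ Φ` with positive cone `D`, let `x ∈ V`, and set `Υ_x = {w ∈ W₀ : wD ⊆ D_x}`.
Then the topological closure of `D_x` equals the union over `w ∈ Υ_x` of the sets
`w · (closure of D)`. -/
theorem stmt_9 (V : Type*) [NormedAddCommGroup V] [NormedSpace ℝ V]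
    [FiniteDimensional ℝ V]
    (Φ : Set (Module.Dual ℝ V)) (hfin : Φ.Finite) (h0 : (0 : Module.Dual ℝ V) ∉ Φ)
    (hspan : Submodule.span ℝ Φ = ⊤)
    (coroot : Module.Dual ℝ V → V)
    (hpair : ∀ α ∈ Φ, α (coroot α) = 2)
    (hreflco : ∀ α ∈ Φ, ∀ β ∈ Φ, coroot β - α (coroot β) • coroot α ∈ coroot '' Φ)
    (hrefl : ∀ α ∈ Φ, ∀ β ∈ Φ, β - β (coroot α) • α ∈ Φ)
    (hcrys : ∀ α ∈ Φ, ∀ β ∈ Φ, ∃ n : ℤ, β (coroot α) = (n : ℝ))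
    (hred : ∀ α ∈ Φ, ∀ c : ℝ, c • α ∈ Φ → c = 1 ∨ c = -1)
    -- the linear reflections `s α : v ↦ v − α(v) α^∨` for `α ∈ Φ`
    (s : Module.Dual ℝ V → Equiv.Perm V)
    (hs : ∀ α ∈ Φ, ∀ v : V, s α v = v - α v • coroot α)
    -- a positive system `Pos = Φ^+ ⊆ Φ`
    (Pos : Set (Module.Dual ℝ V))
    (hPos : ∃ v0 : V, (∀ α ∈ Φ, α v0 ≠ 0) ∧ Pos = {α ∈ Φ | 0 < α v0})
    (x : V) :
    closure {v : V | ∀ α ∈ Pos, (∃ n : ℤ, α x = (n : ℝ)) → 0 < α v} =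
      ⋃ w ∈ {w : Equiv.Perm V | w ∈ Subgroup.closure (s '' Φ) ∧
          ⇑w '' {v : V | ∀ α ∈ Pos, 0 < α v} ⊆
            {v : V | ∀ α ∈ Pos, (∃ n : ℤ, α x = (n : ℝ)) → 0 < α v}},
        ⇑w '' closure {v : V | ∀ α ∈ Pos, 0 < α v} :=
  stmt_9_general V Φ hfin hspan coroot hpair hrefl s hs Pos hPos x
end

section
/- Let q be a prime power with q ≢ 1 (mod 3) and let F_q be the finite field with q elements. If g ∈ SL(3, F_q) satisfies g^(q² + q + 1) = 1 and g has an eigenvector in F_q³ (i.e., there exist a nonzero vector v ∈ F_q³ and λ ∈ F_q with g·v = λ·v), then g = 1. (This expresses that the anisotropic maximal torus of order q² + q + 1 in SL(3, F_q) meets every proper parabolic subgroup only in the center, which is trivial when 3 does not divide q − 1.) -/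
/-!
Let `N = q² + q + 1`. An eigenvalue `λ` of `g` satisfies `λ ^ N = 1` in `F_qˣ`, a group of order
`q - 1`, and `N ≡ 3 (mod q - 1)` is coprime to `q - 1` because `q ≢ 1 (mod 3)`; so `λ = 1` and `g`
fixes the line `L` spanned by the eigenvector. The map induced by `g` on the plane `F_q³ / L` has
order dividing `N`, which is coprime to `|GL₂(F_q)| = q (q - 1)² (q + 1)`; so it is trivial and
`g - 1` maps `F_q³` into `L` and kills `L`. Hence `(g - 1)² = 0`, so `g ^ q = 1 + q (g - 1) = 1`, and
`g ^ N = g ^ q = 1` with `N` coprime to `q` forces `g = 1`.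
-/

open Module

namespace Nat

lemma coprime_sq_add_self_add_one_self (q : ℕ) : (q ^ 2 + q + 1).Coprime q := by
  rw [show q ^ 2 + q + 1 = 1 + q * (q + 1) by ring, coprime_add_mul_left_left]
  exact coprime_one_left q

lemma coprime_sq_add_self_add_one_add_one (q : ℕ) : (q ^ 2 + q + 1).Coprime (q + 1) := by
  rw [show q ^ 2 + q + 1 = 1 + (q + 1) * q by ring, coprime_add_mul_left_left]
  exact coprime_one_left _

lemma coprime_sq_add_self_add_one_sub_one {q : ℕ} (hq : q % 3 ≠ 1) :
    (q ^ 2 + q + 1).Coprime (q - 1) := by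
  obtain _ | r := q
  · simp
  rw [add_tsub_cancel_right, show (r + 1) ^ 2 + (r + 1) + 1 = 3 + r * (r + 3) by ring,
    coprime_add_mul_left_left]
  exact (Prime.coprime_iff_not_dvd prime_three).mpr (by omega)

lemma coprime_sq_add_self_add_one_card_GL_two {q : ℕ} (hq : q % 3 ≠ 1) :
    (q ^ 2 + q + 1).Coprime (∏ i : Fin 2, (q ^ 2 - q ^ (i : ℕ))) := by
  have hq1 := coprime_sq_add_self_add_one_sub_one hq
  have h1 : q ^ 2 - 1 = (q + 1) * (q - 1) := by rw [← Nat.sq_sub_sq, one_pow]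
  have h2 : q ^ 2 - q = q * (q - 1) := by rw [Nat.mul_sub_one, sq]
  rw [Fin.prod_univ_two, Fin.val_zero, Fin.val_one, pow_zero, pow_one, h1, h2]
  exact ((coprime_sq_add_self_add_one_add_one q).mul_right hq1).mul_right
    ((coprime_sq_add_self_add_one_self q).mul_right hq1)

end Nat

lemma eq_one_of_pow_eq_one_of_coprime_card_units {M : Type*} [Monoid M] {x : M} {n : ℕ}
    (hx : x ^ n = 1) (hn : n ≠ 0) (hcop : n.Coprime (Nat.card Mˣ)) : x = 1 := by
  have hcard : x ^ Nat.card Mˣ = 1 := by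
    have := congrArg Units.val (pow_card_eq_one' (x := Units.ofPowEqOne x n hx hn))
    rwa [Units.val_pow_eq_pow_val, Units.val_ofPowEqOne, Units.val_one] at this
  simpa [hcop] using pow_gcd_eq_one.mpr ⟨hx, hcard⟩

lemma one_add_pow_of_mul_self_eq_zero {R : Type*} [Semiring R] {a : R} (ha : a * a = 0)
    (k : ℕ) : (1 + a) ^ k = 1 + k * a := by
  induction k with
  | zero => simp
  | succ k ih =>
    rw [pow_succ, ih, add_mul, one_mul, mul_add, mul_one, mul_assoc, ha, mul_zero, add_zero,
      Nat.cast_succ, add_one_mul, add_assoc, add_comm a]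

lemma pow_eq_one_of_sub_one_mul_self_eq_zero {R : Type*} [Ring R] {x : R}
    (hx : (x - 1) * (x - 1) = 0) {p : ℕ} (hp : (p : R) = 0) : x ^ p = 1 := by
  simpa [hp] using one_add_pow_of_mul_self_eq_zero hx p

lemma finrank_quotient_span_singleton {K V : Type*} [DivisionRing K] [AddCommGroup V]
    [Module K V] [FiniteDimensional K V] {v : V} (hv : v ≠ 0) :
    finrank K (V ⧸ K ∙ v) = finrank K V - 1 := by
  rw [← Submodule.finrank_quotient_add_finrank (K ∙ v), finrank_span_singleton hv,
    add_tsub_cancel_right]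

namespace Module.End

lemma HasEigenvector.pow_eq_one_of_pow_eq_one {R M : Type*} [CommRing R] [IsDomain R]
    [AddCommGroup M] [Module R M] [IsTorsionFree R M] {f : End R M} {μ : R} {v : M}
    (hv : f.HasEigenvector μ v) {n : ℕ} (hf : f ^ n = 1) : μ ^ n = 1 := by
  refine smul_left_injective R hv.2 ?_
  simp only [← hv.pow_apply, hf, one_apply, one_smul]

section FixedSubmodule

variable {R M : Type*} [CommRing R] [AddCommGroup M] [Module R M]
  {W : Submodule R M} {f : End R M}

lemma sub_one_mul_self_eq_zero_of_mapQ_eq_one (hW : ∀ w ∈ W, f w = w)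
    (hle : W ≤ W.comap f) (hf : W.mapQ W f hle = 1) : (f - 1) * (f - 1) = 0 := by
  have hmem : ∀ x, f x - x ∈ W := fun x ↦
    (Submodule.Quotient.eq W).mp (by simpa using LinearMap.congr_fun hf (W.mkQ x))
  ext x
  simpa [sub_eq_zero] using hW _ (hmem x)

theorem eq_one_of_pow_eq_one_of_forall_mem_eq (hW : ∀ w ∈ W, f w = w) {n p : ℕ}
    (hf : f ^ n = 1) (hn : n ≠ 0) (hp : (p : R) = 0) (hnp : n.Coprime p)
    (hnW : n.Coprime (Nat.card (End R (M ⧸ W))ˣ)) : f = 1 := by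
  have hle : W ≤ W.comap f := fun w hw ↦ by simpa [hW w hw] using hw
  have hQ : W.mapQ W f hle = 1 := by
    refine eq_one_of_pow_eq_one_of_coprime_card_units ?_ hn hnW
    rw [← Submodule.mapQ_pow]
    ext x
    simp [hf]
  have hfp : f ^ p = 1 := pow_eq_one_of_sub_one_mul_self_eq_zero
    (sub_one_mul_self_eq_zero_of_mapQ_eq_one hW hle hQ)
    (by rw [← map_natCast (algebraMap R (End R M)), hp, map_zero])
  simpa [hnp] using pow_gcd_eq_one.mpr ⟨hf, hfp⟩

end FixedSubmodule

lemma natCard_units (K V : Type*) [Field K] [Fintype K] [AddCommGroup V] [Module K V]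
    [FiniteDimensional K V] :
    Nat.card (End K V)ˣ =
      ∏ i : Fin (finrank K V), (Fintype.card K ^ finrank K V - Fintype.card K ^ (i : ℕ)) := by
  rw [← Matrix.card_GL_field]
  exact Nat.card_congr
    (Units.mapEquiv (LinearMap.toMatrixAlgEquiv (finBasis K V)).toMulEquiv).toEquiv

end Module.End

/-- Let `q` be a prime power with `q ≢ 1 (mod 3)` and `F_q` the finite field with `q`
elements.  If `g ∈ SL(3, F_q)` satisfies `g^(q² + q + 1) = 1` and `g` has an eigenvector
in `F_q³`, then `g = 1`. -/
theorem stmt_14 (F : Type*) [Field F] [Fintype F]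
    (hq : Fintype.card F % 3 ≠ 1)
    (g : Matrix.SpecialLinearGroup (Fin 3) F)
    (hord : g ^ (Fintype.card F ^ 2 + Fintype.card F + 1) = 1)
    (hev : ∃ v : Fin 3 → F, v ≠ 0 ∧ ∃ lam : F,
      (g : Matrix (Fin 3) (Fin 3) F).mulVec v = lam • v) :
    g = 1 := by
  obtain ⟨v, hv, lam, hlam⟩ := hev
  set q := Fintype.card F
  have hN : q ^ 2 + q + 1 ≠ 0 := Nat.succ_ne_zero _
  set f : End F (Fin 3 → F) := Matrix.toLinAlgEquiv' (g : Matrix (Fin 3) (Fin 3) F)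
  have hfN : f ^ (q ^ 2 + q + 1) = 1 := by
    rw [← map_pow, ← Matrix.SpecialLinearGroup.coe_pow, hord,
      Matrix.SpecialLinearGroup.coe_one, map_one]
  have hfv : f.HasEigenvector lam v := ⟨End.mem_eigenspace_iff.mpr hlam, hv⟩
  have hlam1 : lam = 1 := by
    refine eq_one_of_pow_eq_one_of_coprime_card_units (hfv.pow_eq_one_of_pow_eq_one hfN) hN ?_
    rw [Nat.card_units, Nat.card_eq_fintype_card]
    exact Nat.coprime_sq_add_self_add_one_sub_one hq
  have hW : ∀ w ∈ F ∙ v, f w = w := by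
    intro w hw
    obtain ⟨c, rfl⟩ := Submodule.mem_span_singleton.mp hw
    rw [map_smul, hfv.apply_eq_smul, hlam1, one_smul]
  have hf1 : f = 1 := by
    refine End.eq_one_of_pow_eq_one_of_forall_mem_eq hW hfN hN (Nat.cast_card_eq_zero F)
      (Nat.coprime_sq_add_self_add_one_self q) ?_
    rw [End.natCard_units, finrank_quotient_span_singleton hv, finrank_fin_fun]
    exact Nat.coprime_sq_add_self_add_one_card_GL_two hq
  exact Subtype.ext <| Matrix.toLinAlgEquiv'.injective (hf1.trans (map_one _).symm)
end
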